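/- arXiv:1707.08997 — 10 statements merged into one kernel-verified Lean document; each statement's English description precedes it below -/
import Mathlib

section
/- Let A be an additive category, and suppose an object X admits two decompositions X ≅ X₁ ⊕ … ⊕ Xₙ and X ≅ Y₁ ⊕ … ⊕ Yₘ in which every endomorphism ring End(Xᵢ) and every End(Yⱼ) is a local ring. Then n = m and there is a permutation σ of {1, …, n} such that Xᵢ ≅ Y_{σ(i)} for all i. -/
open CategoryTheory CategoryTheory.Limits

section RingLemmas

variable {R : Type*} [Ring R] [IsLocalRing R]

private lemma my_isUnit_or_isUnit_of_isUnit_add {a b : R} (h : IsUnit (a + b)) :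
    IsUnit a ∨ IsUnit b := by
  obtain ⟨u, hu⟩ := h
  have h1 : (↑u⁻¹ * a) + (↑u⁻¹ * b) = 1 := by
    rw [← mul_add, ← hu, Units.inv_mul]
  rcases IsLocalRing.isUnit_or_isUnit_of_add_one h1 with hx | hx
  · left
    have : IsUnit ((u : R) * (↑u⁻¹ * a)) := u.isUnit.mul hx
    rwa [← mul_assoc, Units.mul_inv, one_mul] at this
  · right
    have : IsUnit ((u : R) * (↑u⁻¹ * b)) := u.isUnit.mul hx
    rwa [← mul_assoc, Units.mul_inv, one_mul] at this

private lemma my_exists_isUnit_of_sum {ι : Type*} (s : Finset ι) (f : ι → R)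
    (h : IsUnit (∑ i ∈ s, f i)) : ∃ i ∈ s, IsUnit (f i) := by
  induction s using Finset.cons_induction with
  | empty =>
      rw [Finset.sum_empty, isUnit_zero_iff] at h
      exact absurd h.symm one_ne_zero
  | cons a s ha ih =>
      rw [Finset.sum_cons] at h
      rcases my_isUnit_or_isUnit_of_isUnit_add h with h' | h'
      · exact ⟨a, Finset.mem_cons_self a s, h'⟩
      · obtain ⟨i, hi, hu⟩ := ih h'
        exact ⟨i, Finset.mem_cons_of_mem hi, hu⟩

/-- In a local ring idempotents are `0` or `1`. -/
private lemma my_idem_eq_zero_or_one {e : R} (he : e * e = e) : e = 0 ∨ e = 1 := by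
  rcases IsLocalRing.isUnit_or_isUnit_of_add_one (a := e) (b := 1 - e) (by abel) with h | h
  · right
    exact h.mul_left_cancel (by rw [he, mul_one])
  · left
    refine h.mul_left_cancel ?_
    rw [mul_zero, sub_mul, one_mul, he, sub_self]

end RingLemmas

section CatLemmas

variable {A : Type*} [Category A] [Preadditive A]

/-- If `u ≫ v` is invertible, `End Q` is local and `End P` is nontrivial,
then `u` is an isomorphism. -/
private lemma my_isIso_of_isIso_comp {P Q : A} (u : P ⟶ Q) (v : Q ⟶ P)
    [IsIso (u ≫ v)] [IsLocalRing (End Q)] [Nontrivial (End P)] : IsIso u := by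
  obtain ⟨w, huw⟩ : ∃ w : Q ⟶ P, u ≫ w = 𝟙 P :=
    ⟨v ≫ inv (u ≫ v), by rw [← Category.assoc, IsIso.hom_inv_id]⟩
  set e : End Q := (w ≫ u : Q ⟶ Q) with hedef
  have he : e * e = e := by
    show ((w ≫ u) ≫ (w ≫ u) : Q ⟶ Q) = w ≫ u
    rw [Category.assoc, ← Category.assoc u, huw, Category.id_comp]
  rcases my_idem_eq_zero_or_one he with h | h
  · exfalso
    have h1 : (𝟙 P : P ⟶ P) = u ≫ (e : Q ⟶ Q) ≫ w := by
      show 𝟙 P = u ≫ (w ≫ u) ≫ w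
      rw [← Category.assoc, ← Category.assoc, huw, Category.id_comp, huw]
    rw [h] at h1
    have h1' : (𝟙 P : P ⟶ P) = u ≫ (0 : Q ⟶ Q) ≫ w := h1
    simp only [Limits.zero_comp, Limits.comp_zero] at h1'
    exact one_ne_zero (α := End P) (by simpa [End.one_def] using h1')
  · have hwu : (w ≫ u : Q ⟶ Q) = 𝟙 Q := by
      rw [← hedef] at *
      simpa [End.one_def] using h
    exact ⟨⟨w, huw, hwu⟩⟩

variable [HasFiniteBiproducts A]

attribute [local instance] hasBinaryBiproducts_of_finite_biproducts


/-- Splitting off the first summand of a biproduct over `Fin (n+1)`. -/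
private noncomputable def mySplit {n : ℕ} (p : Fin (n + 1) → A) :
    ⨁ p ≅ p 0 ⊞ ⨁ (p ∘ Fin.succ) where
  hom := biprod.lift (biproduct.π p 0) (biproduct.lift fun i => biproduct.π p i.succ)
  inv := biprod.desc (biproduct.ι p 0) (biproduct.desc fun i => biproduct.ι p i.succ)
  hom_inv_id := by
    rw [biprod.lift_desc, biproduct.lift_desc, ← biproduct.total, Fin.sum_univ_succ]
  inv_hom_id := by
    ext <;> simp [biproduct.ι_π, Fin.succ_ne_zero, (Fin.succ_injective _).ne_iff,
      Fin.succ_ne_zero _ |>.symm]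

/-- The key step: some component of an isomorphism out of a biproduct with a local first
summand is an isomorphism. -/
private lemma my_key {n m : ℕ} (X : Fin (n + 1) → A) (Y : Fin m → A)
    (hX : ∀ i, IsLocalRing (End (X i))) (hY : ∀ j, IsLocalRing (End (Y j)))
    (f : ⨁ X ≅ ⨁ Y) :
    ∃ j : Fin m, IsIso (biproduct.ι X 0 ≫ f.hom ≫ biproduct.π Y j) := by
  haveI := hX 0
  have htot : (∑ j : Fin m,
      ((biproduct.ι X 0 ≫ f.hom ≫ biproduct.π Y j) ≫
        (biproduct.ι Y j ≫ f.inv ≫ biproduct.π X 0)) : End (X 0)) = 1 := by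
    show _ = 𝟙 (X 0)
    have : (∑ j : Fin m,
        ((biproduct.ι X 0 ≫ f.hom ≫ biproduct.π Y j) ≫
          (biproduct.ι Y j ≫ f.inv ≫ biproduct.π X 0)))
        = biproduct.ι X 0 ≫ f.hom ≫
            (∑ j : Fin m, biproduct.π Y j ≫ biproduct.ι Y j) ≫ f.inv ≫
          biproduct.π X 0 := by
      rw [Preadditive.sum_comp, Preadditive.comp_sum, Preadditive.comp_sum]
      simp [Category.assoc]
    rw [this, biproduct.total]
    simp
  obtain ⟨j, -, hj⟩ := my_exists_isUnit_of_sum (R := End (X 0)) Finset.univ _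
    (htot ▸ isUnit_one)
  refine ⟨j, ?_⟩
  rw [isUnit_iff_isIso] at hj
  haveI := hY j
  haveI : IsIso ((biproduct.ι X 0 ≫ f.hom ≫ biproduct.π Y j) ≫
      (biproduct.ι Y j ≫ f.inv ≫ biproduct.π X 0)) := hj
  exact my_isIso_of_isIso_comp _ (biproduct.ι Y j ≫ f.inv ≫ biproduct.π X 0)

private lemma my_main : ∀ (n m : ℕ) (X : Fin n → A) (Y : Fin m → A),
    (∀ i, IsLocalRing (End (X i))) → (∀ j, IsLocalRing (End (Y j))) →
    (⨁ X ≅ ⨁ Y) →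
    n = m ∧ ∃ σ : Fin n ≃ Fin m, ∀ i, Nonempty (X i ≅ Y (σ i)) := by
  intro n
  induction n with
  | zero =>
      intro m X Y hX hY f
      rcases m with - | m
      · exact ⟨rfl, Equiv.refl _, fun i => i.elim0⟩
      · obtain ⟨j, -⟩ := my_key Y X hY hX f.symm
        exact j.elim0
  | succ n ih =>
      intro m X Y hX hY f
      obtain ⟨j, hj⟩ := my_key X Y hX hY f
      have hj' : ∀ k (_ : k = j), IsIso (biproduct.ι X 0 ≫ f.hom ≫ biproduct.π Y k) := by
        rintro k rfl; exact hj
      rcases m with - | m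
      · exact j.elim0
      -- reindex Y so that Y j comes first
      set Y' : Fin (m + 1) → A := Y ∘ (Equiv.swap 0 j) with hY'
      have hY'loc : ∀ k, IsLocalRing (End (Y' k)) := fun k => hY _
      let w : ⨁ Y' ≅ ⨁ Y :=
        biproduct.whiskerEquiv (Equiv.swap 0 j) (fun k => Iso.refl (Y' k))
      let F : X 0 ⊞ ⨁ (X ∘ Fin.succ) ≅ Y' 0 ⊞ ⨁ (Y' ∘ Fin.succ) :=
        (mySplit X).symm ≪≫ f ≪≫ w.symm ≪≫ mySplit Y'
      have hcomp : biprod.inl ≫ F.hom ≫ biprod.fst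
          = biproduct.ι X 0 ≫ f.hom ≫ biproduct.π Y (Equiv.swap 0 j 0) := by
        simp only [F, mySplit, w, Iso.trans_hom, Iso.symm_hom, Category.assoc]
        rw [biproduct.whiskerEquiv_inv_eq_lift]
        simp [Y', Function.comp]
      haveI : IsIso (biprod.inl ≫ F.hom ≫ biprod.fst) := by
        rw [hcomp]
        exact hj' _ (Equiv.swap_apply_left 0 j)
      have f' : ⨁ (X ∘ Fin.succ) ≅ ⨁ (Y' ∘ Fin.succ) := Biprod.isoElim F
      obtain ⟨hnm, σ', hσ'⟩ := ih m (X ∘ Fin.succ) (Y' ∘ Fin.succ)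
        (fun i => hX _) (fun k => hY'loc _) f'
      subst hnm
      refine ⟨rfl, Equiv.Perm.decomposeFin.symm (j, σ'), ?_⟩
      intro i
      refine Fin.cases ?_ ?_ i
      · rw [Equiv.Perm.decomposeFin_symm_apply_zero]
        exact ⟨asIso (biproduct.ι X 0 ≫ f.hom ≫ biproduct.π Y j)⟩
      · intro i'
        rw [Equiv.Perm.decomposeFin_symm_apply_succ]
        exact hσ' i'

end CatLemmas

/-- **Krull–Schmidt uniqueness of decompositions.** If an object of an additive
category decomposes in two ways as a finite direct sum of objects with local
endomorphism rings, the two decompositions agree up to permutation and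
isomorphism of the summands. -/
theorem stmt_0 {A : Type*} [Category A] [Preadditive A] [HasFiniteBiproducts A]
    {n m : ℕ} (X : Fin n → A) (Y : Fin m → A)
    (hX : ∀ i, IsLocalRing (End (X i))) (hY : ∀ j, IsLocalRing (End (Y j)))
    (Z : A) (e₁ : Z ≅ ⨁ X) (e₂ : Z ≅ ⨁ Y) :
    n = m ∧ ∃ σ : Fin n ≃ Fin m, ∀ i, Nonempty (X i ≅ Y (σ i)) := by
  exact my_main n m X Y hX hY (e₁.symm ≪≫ e₂)
end

section
/- Let B be an additive category and let B̄ denote its Karoubi (idempotent) completion, with canonical functor ι : B → B̄. If X and Y are objects of B such that ι(X) ⊕ Z ≅ ι(Y) ⊕ Z for some object Z of B̄, then there exists an object W of B with X ⊕ W ≅ Y ⊕ W. (Equivalently, the natural map K₀(B) → K₀(B̄) on Grothendieck groups of additive categories is injective.) -/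
open CategoryTheory CategoryTheory.Limits CategoryTheory.Idempotents

attribute [local instance] CategoryTheory.Limits.hasBinaryBiproducts_of_finite_biproducts

/-- **Injectivity of `K₀(B) → K₀(B̄)`.** If two objects of an additive category `B`
become stably isomorphic in the Karoubi (idempotent) completion of `B`, then they
are already stably isomorphic in `B`. -/
theorem stmt_2 {B : Type*} [Category B] [Preadditive B] [HasFiniteBiproducts B]
    (X Y : B) (Z : Karoubi B)
    (e : (toKaroubi B).obj X ⊞ Z ≅ (toKaroubi B).obj Y ⊞ Z) :
    ∃ W : B, Nonempty (X ⊞ W ≅ Y ⊞ W) := by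
  have hpb : PreservesBinaryBiproducts (toKaroubi B) := by
    apply preservesBinaryBiproducts_of_preservesBiproducts
  have h1 : PreservesBinaryBiproduct X Z.X (toKaroubi B) := hpb.preserves
  have h2 : PreservesBinaryBiproduct Y Z.X (toKaroubi B) := hpb.preserves
  refine ⟨Z.X, ⟨?_⟩⟩
  let Z' : Karoubi B := ⟨Z.X, 𝟙 Z.X - Z.p, by simp [Preadditive.sub_comp, Preadditive.comp_sub, Z.idem]⟩
  have hZ : Z ⊞ Z' ≅ (toKaroubi B).obj Z.X := by
    refine ⟨biprod.desc ⟨Z.p, by simp [Z.idem]⟩ ⟨𝟙 Z.X - Z.p, ?_⟩,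
      biprod.lift ⟨Z.p, by simp [Z.idem]⟩ ⟨𝟙 Z.X - Z.p, ?_⟩, ?_, ?_⟩
    · simp [Z', Preadditive.sub_comp, Preadditive.comp_sub, Z.idem]
    · simp [Z', Preadditive.sub_comp, Preadditive.comp_sub, Z.idem]
    · apply biprod.hom_ext <;> apply biprod.hom_ext' <;>
        ext <;> simp [Z', Preadditive.sub_comp, Preadditive.comp_sub, Z.idem]
    · ext; simp [Z', Preadditive.sub_comp, Preadditive.comp_sub, Z.idem]
  have e2 : (toKaroubi B).obj (X ⊞ Z.X) ≅ (toKaroubi B).obj (Y ⊞ Z.X) :=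
    (toKaroubi B).mapBiprod X Z.X ≪≫ biprod.mapIso (Iso.refl _) hZ.symm ≪≫
      (biprod.associator _ _ _).symm ≪≫ biprod.mapIso e (Iso.refl _) ≪≫
      biprod.associator _ _ _ ≪≫ biprod.mapIso (Iso.refl _) hZ ≪≫
      ((toKaroubi B).mapBiprod Y Z.X).symm
  exact (toKaroubi B).preimageIso e2
end

section
/- Let A be an additive category such that for all objects X, Y the abelian group of morphisms Hom(X, Y) is finitely generated. Suppose X, Y are objects of A that are stably isomorphic, i.e., X ⊕ Z ≅ Y ⊕ Z for some object Z. Then X is a retract of Yⁿ for some n > 0: there exist morphisms f : X → Y^{⊕n} and g : Y^{⊕n} → X with g ∘ f = id_X. -/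
/-!
Work modulo the morphisms that are sums of composites through `Y`. Let `β : X ⟶ Z`, `γ : Z ⟶ X`
and `δ, δ' : Z ⟶ Z` be components of `e` and `e⁻¹`. Modulo maps through `Y` (composites in
diagrammatic order) one has `𝟙 X ≡ β ≫ γ`, `𝟙 Z ≡ δ ≫ δ'` and `β ≫ δ' ≡ 0`. Hence `(· ≫ δ')` is
a surjective endomorphism of the finitely generated abelian group `End Z / (maps through Y)`, so
it is injective (Orzech). It kills `γ ≫ β`, so `γ ≫ β ≡ 0`, then `γ ≡ γ ≫ β ≫ γ ≡ 0` and
`𝟙 X ≡ β ≫ γ ≡ 0`: the identity of `X` is a finite sum of maps `X ⟶ Y ⟶ X`.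
-/

open CategoryTheory CategoryTheory.Limits

attribute [local instance] CategoryTheory.Limits.hasBinaryBiproducts_of_finite_biproducts

theorem Submodule.mem_of_apply_mem_of_sub_apply_mem {R M : Type*} [Ring R] [AddCommGroup M]
    [Module R M] [IsNoetherian R M] (N : Submodule R M) (f g : M →ₗ[R] M)
    (hf : N ≤ N.comap f) (hfg : ∀ x, x - f (g x) ∈ N) {x : M} (hx : f x ∈ N) : x ∈ N := by
  have hsurj : Function.Surjective (N.mapQ N f hf) := by
    rintro ⟨y⟩
    exact ⟨N.mkQ (g y), (Submodule.Quotient.eq N).mpr (N.neg_mem_iff.mp (by simpa using hfg y))⟩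
  have hinj := IsNoetherian.injective_of_surjective_endomorphism _ hsurj
  rw [← Submodule.Quotient.mk_eq_zero]
  exact hinj (by simpa using (Submodule.Quotient.mk_eq_zero N).mpr hx)

namespace CategoryTheory

variable {A : Type*} [Category A] [Preadditive A]

def homThrough (Y U V : A) : AddSubgroup (U ⟶ V) :=
  AddSubgroup.closure {w | ∃ (u : U ⟶ Y) (v : Y ⟶ V), w = u ≫ v}

namespace homThrough

variable {Y U V W : A}

theorem comp_mem (u : U ⟶ Y) (v : Y ⟶ V) : u ≫ v ∈ homThrough Y U V :=
  AddSubgroup.subset_closure ⟨u, v, rfl⟩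

theorem comp_mem_right {x : U ⟶ V} (hx : x ∈ homThrough Y U V) (w : V ⟶ W) :
    x ≫ w ∈ homThrough Y U W := by
  induction hx using AddSubgroup.closure_induction with
  | mem x hx =>
    obtain ⟨u, v, rfl⟩ := hx
    simpa using comp_mem u (v ≫ w)
  | zero => simp [zero_mem]
  | add x y _ _ hx hy => simpa using add_mem hx hy
  | neg x _ hx => simpa using neg_mem hx

theorem comp_mem_left (w : W ⟶ U) {x : U ⟶ V} (hx : x ∈ homThrough Y U V) :
    w ≫ x ∈ homThrough Y W V := by
  induction hx using AddSubgroup.closure_induction with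
  | mem x hx =>
    obtain ⟨u, v, rfl⟩ := hx
    simpa using comp_mem (w ≫ u) v
  | zero => simp [zero_mem]
  | add x y _ _ hx hy => simpa using add_mem hx hy
  | neg x _ hx => simpa using neg_mem hx

theorem exists_eq_sum {x : U ⟶ V} (hx : x ∈ homThrough Y U V) :
    ∃ (n : ℕ) (u : Fin n → (U ⟶ Y)) (v : Fin n → (Y ⟶ V)), x = ∑ i, u i ≫ v i := by
  induction hx using AddSubgroup.closure_induction with
  | mem x hx =>
    obtain ⟨u, v, rfl⟩ := hx
    exact ⟨1, fun _ => u, fun _ => v, by simp⟩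
  | zero => exact ⟨0, finZeroElim, finZeroElim, by simp⟩
  | add x y _ _ hx hy =>
    obtain ⟨n, u, v, rfl⟩ := hx
    obtain ⟨m, u', v', rfl⟩ := hy
    exact ⟨n + m, Fin.append u u', Fin.append v v', by simp [Fin.sum_univ_add]⟩
  | neg x _ hx =>
    obtain ⟨n, u, v, rfl⟩ := hx
    exact ⟨n, fun i => -u i, v, by simp⟩

theorem comp_sub_snd_comp_inr_comp_mem [HasBinaryBiproduct Y W] (a : U ⟶ Y ⊞ W)
    (b : Y ⊞ W ⟶ V) : a ≫ b - (a ≫ biprod.snd) ≫ (biprod.inr ≫ b) ∈ homThrough Y U V := by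
  have h : a ≫ b = (a ≫ biprod.fst) ≫ (biprod.inl ≫ b) + (a ≫ biprod.snd) ≫ (biprod.inr ≫ b) := by
    conv_lhs => rw [← Category.comp_id a, ← biprod.total]
    simp only [Preadditive.add_comp, Preadditive.comp_add, Category.assoc]
  rw [h, add_sub_cancel_right]
  exact comp_mem _ _

end homThrough

theorem exists_retraction_of_id_mem_homThrough [HasFiniteBiproducts A] {X Y : A}
    (h : 𝟙 X ∈ homThrough Y X X) :
    ∃ (n : ℕ), 0 < n ∧ ∃ (f : X ⟶ ⨁ (fun _ : Fin n => Y))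
      (g : ⨁ (fun _ : Fin n => Y) ⟶ X), f ≫ g = 𝟙 X := by
  obtain ⟨n, u, v, huv⟩ := homThrough.exists_eq_sum h
  refine ⟨n + 1, n.succ_pos, biproduct.lift (Fin.snoc u 0), biproduct.desc (Fin.snoc v 0), ?_⟩
  simp [biproduct.lift_desc, Fin.sum_univ_castSucc, huv]

theorem id_mem_homThrough_of_iso [HasBinaryBiproducts A] {X Y Z : A}
    [IsNoetherian ℤ (Z ⟶ Z)] (e : X ⊞ Z ≅ Y ⊞ Z) : 𝟙 X ∈ homThrough Y X X := by
  set β : X ⟶ Z := biprod.inl ≫ e.hom ≫ biprod.snd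
  set γ : Z ⟶ X := biprod.inr ≫ e.inv ≫ biprod.fst
  set δ : Z ⟶ Z := biprod.inr ≫ e.hom ≫ biprod.snd
  set δ' : Z ⟶ Z := biprod.inr ≫ e.inv ≫ biprod.snd
  have mem_of_iso {U V : A} (i : U ⟶ X ⊞ Z) (j : X ⊞ Z ⟶ V) :
      i ≫ j - (i ≫ e.hom ≫ biprod.snd) ≫ (biprod.inr ≫ e.inv ≫ j) ∈ homThrough Y U V := by
    simpa using homThrough.comp_sub_snd_comp_inr_comp_mem (Y := Y) (i ≫ e.hom) (e.inv ≫ j)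
  have hX : 𝟙 X - β ≫ γ ∈ homThrough Y X X := by
    simpa only [biprod.inl_fst] using mem_of_iso biprod.inl biprod.fst
  have hZ : 𝟙 Z - δ ≫ δ' ∈ homThrough Y Z Z := by
    simpa only [biprod.inr_snd] using mem_of_iso biprod.inr biprod.snd
  have hβδ' : β ≫ δ' ∈ homThrough Y X Z := by
    simpa only [biprod.inl_snd, zero_sub, neg_mem_iff] using mem_of_iso biprod.inl biprod.snd
  have hγβ : γ ≫ β ∈ homThrough Y Z Z := by
    refine (homThrough Y Z Z).toIntSubmodule.mem_of_apply_mem_of_sub_apply_mem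
      (Preadditive.rightComp Z δ').toIntLinearMap (Preadditive.rightComp Z δ).toIntLinearMap
      (fun s hs => homThrough.comp_mem_right hs δ') (fun s => ?_) ?_
    · exact (by simpa using homThrough.comp_mem_left s hZ : s - (s ≫ δ) ≫ δ' ∈ homThrough Y Z Z)
    · exact (by simpa using homThrough.comp_mem_left γ hβδ' : (γ ≫ β) ≫ δ' ∈ homThrough Y Z Z)
  have hγ : γ ∈ homThrough Y Z X := by
    simpa using add_mem (homThrough.comp_mem_left γ hX) (homThrough.comp_mem_right hγβ γ)
  simpa using add_mem hX (homThrough.comp_mem_left β hγ)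

end CategoryTheory

/-- In an additive category with finitely generated Hom groups, if `X` and `Y` are
stably isomorphic then `X` is a retract of `Y^{⊕n}` for some `n > 0`. -/
theorem stmt_4 {A : Type*} [Category A] [Preadditive A] [HasFiniteBiproducts A]
    (hfg : ∀ X Y : A, AddGroup.FG (X ⟶ Y))
    (X Y Z : A) (e : X ⊞ Z ≅ Y ⊞ Z) :
    ∃ (n : ℕ), 0 < n ∧ ∃ (f : X ⟶ ⨁ (fun _ : Fin n => Y))
      (g : ⨁ (fun _ : Fin n => Y) ⟶ X), f ≫ g = 𝟙 X := by
  have : Module.Finite ℤ (Z ⟶ Z) := Module.Finite.iff_addGroup_fg.mpr (hfg Z Z)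
  exact exists_retraction_of_id_mem_homThrough (id_mem_homThrough_of_iso e)
end

section
/- Let A be an additive category such that for all objects X, Y the abelian group of morphisms Hom(X, Y) is finitely generated. Let X be an object of A whose endomorphism ring End(X) is isomorphic to ℤ. Then for any object Y of A that is stably isomorphic to X (i.e., X ⊕ Z ≅ Y ⊕ Z for some object Z), we have X ≅ Y. -/
/-!
Hom groups turn the stable isomorphism into `Hom(W, X) × Hom(W, Z) ≃ Hom(W, Y) × Hom(W, Z)` and
its dual. A finitely generated abelian group cancels against a free one (torsion by counting, since
torsion subgroups are finite; then rank), so `Hom(X, Y) ≅ ℤ` and then `End Y ≅ ℤ`. Let `u` generate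
`Hom(X, Y)`. Precomposition `u^* : End Y → Hom(X, Y)` is onto, hence bijective since both are `ℤ`.
The cokernel of `u^* : Hom(Y, W) → Hom(X, W)` is additive in `W`; as it vanishes at `Y`, the
stable isomorphism and cancellation make it vanish at `X`, giving `v` with `u ≫ v = 𝟙 X`. Then
`u^*(v ≫ u) = u = u^*(𝟙 Y)` and injectivity of `u^*` give `v ≫ u = 𝟙 Y`.
-/

open CategoryTheory CategoryTheory.Limits

attribute [local instance] CategoryTheory.Limits.hasBinaryBiproducts_of_finite_biproducts

open Function Preadditive

theorem Module.finrank_prod_of_isDomain {R M N : Type*} [CommRing R] [IsDomain R]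
    [AddCommGroup M] [Module R M] [AddCommGroup N] [Module R N] [Module.Finite R M]
    [Module.Finite R N] :
    Module.finrank R (M × N) = Module.finrank R M + Module.finrank R N := by
  rw [← (LinearMap.ker (LinearMap.snd R M N)).finrank_quotient_add_finrank,
    (LinearMap.snd R M N).quotKerEquivOfSurjective LinearMap.snd_surjective |>.finrank_eq,
    LinearMap.ker_snd, LinearMap.finrank_range_of_inj LinearMap.inl_injective, add_comm]

namespace AddCommGroup

variable {G H K : Type*} [AddCommGroup G] [AddCommGroup H] [AddCommGroup K]

theorem finite_torsion [AddGroup.FG G] : Finite (torsion G) := by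
  have : AddGroup.FG (torsion G) := by
    rw [AddGroup.fg_iff_addSubgroup_fg, ← AddSubgroup.toIntSubmodule_toAddSubgroup (torsion G),
      ← Submodule.fg_iff_addSubgroup_fg]
    exact IsNoetherian.noetherian _
  exact finite_of_fg_isAddTorsion _ fun x ↦ AddSubmonoid.isOfFinAddOrder_coe.mp x.2

theorem isAddTorsionFree_of_prod_addEquiv_prod [AddGroup.FG H] [IsAddTorsionFree K]
    (e : G × H ≃+ K × H) : IsAddTorsionFree G := by
  have : Finite (torsion H) := finite_torsion
  have hcard : Nat.card (torsion G) * Nat.card (torsion H) = 1 * Nat.card (torsion H) := by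
    have := AddSubgroup.card_map_of_injective (K := torsion (G × H)) (f := (e : G × H →+ K × H))
      e.injective
    rw [e.map_torsion, torsion_sum, torsion_sum,
      isAddTorsionFree_iff_torsion_eq_bot.mp inferInstance] at this
    simpa [Nat.card_congr (AddSubgroup.prodEquiv _ _).toEquiv, Nat.card_prod] using this.symm
  rw [isAddTorsionFree_iff_torsion_eq_bot, ← AddSubgroup.card_eq_one]
  exact Nat.eq_of_mul_eq_mul_right Nat.card_pos hcard

theorem nonempty_addEquiv_of_prod_addEquiv_prod [AddGroup.FG G] [AddGroup.FG H] [AddGroup.FG K]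
    [IsAddTorsionFree K] (e : G × H ≃+ K × H) : Nonempty (G ≃+ K) := by
  have := isAddTorsionFree_of_prod_addEquiv_prod e
  have hrank := e.toIntLinearEquiv.finrank_eq
  rw [Module.finrank_prod_of_isDomain, Module.finrank_prod_of_isDomain] at hrank
  exact ⟨(LinearEquiv.ofFinrankEq G K (Nat.add_right_cancel hrank)).toAddEquiv⟩

end AddCommGroup

namespace AddMonoidHom

variable {G H : Type*} [AddCommGroup G] [AddCommGroup H]

theorem injective_of_surjective_of_addEquiv [AddGroup.FG G] {f : G →+ H}
    (hf : Surjective f) (e : G ≃+ H) : Injective f := by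
  have : Injective ((e.symm : H →+ G).comp f).toIntLinearMap :=
    IsNoetherian.injective_of_surjective_endomorphism _ (e.symm.surjective.comp hf)
  exact Injective.of_comp (f := e.symm) this

/-- Cancellation applied to `coker φ × coker ψ ≃ coker φ' × coker ψ = coker ψ` kills `coker φ`. -/
theorem surjective_of_prodMap_conj {P Q P' Q' R S : Type*} [AddCommGroup P] [AddCommGroup Q]
    [AddCommGroup P'] [AddCommGroup Q'] [AddCommGroup R] [AddCommGroup S]
    [AddGroup.FG Q] [AddGroup.FG S] {φ : P →+ Q} {φ' : P' →+ Q'} {ψ : R →+ S}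
    (i : P × R ≃+ P' × R) (j : Q × S ≃+ Q' × S)
    (h : (j : Q × S →+ Q' × S).comp (φ.prodMap ψ) = (φ'.prodMap ψ).comp i)
    (hφ' : Surjective φ') : Surjective φ := by
  have hrange : (φ.prodMap ψ).range.map (j : Q × S →+ Q' × S) = (φ'.prodMap ψ).range := by
    rw [map_range, h, range_comp, (i : P × R →+ P' × R).range_eq_top_of_surjective i.surjective,
      ← range_eq_map]
  have : Subsingleton (Q' ⧸ φ'.range) := by
    rw [φ'.range_eq_top_of_surjective hφ']
    exact QuotientAddGroup.subsingleton_quotient_top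
  have : Unique (Q' ⧸ φ'.range) := uniqueOfSubsingleton 0
  have cokernel_equiv : (Q ⧸ φ.range) × (S ⧸ ψ.range) ≃+ PUnit.{1} × (S ⧸ ψ.range) :=
    (QuotientAddGroup.prodAddEquiv _ _).symm.trans <|
    (QuotientAddGroup.quotientAddEquivOfEq (range_prodMap φ ψ)).symm.trans <|
    (QuotientAddGroup.congr _ _ j hrange).trans <|
    (QuotientAddGroup.quotientAddEquivOfEq (range_prodMap φ' ψ)).trans <|
    (QuotientAddGroup.prodAddEquiv _ _).trans <|
    AddEquiv.uniqueProd.trans AddEquiv.uniqueProd.symm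
  obtain ⟨eφ⟩ := AddCommGroup.nonempty_addEquiv_of_prod_addEquiv_prod cokernel_equiv
  have := eφ.toEquiv.subsingleton
  intro q
  exact (QuotientAddGroup.eq_zero_iff (N := φ.range) q).mp (Subsingleton.elim _ _)

end AddMonoidHom

namespace CategoryTheory

variable {C : Type*} [Category C] [Preadditive C]

def Iso.homToAddEquiv {X Y : C} (α : X ≅ Y) (W : C) : (W ⟶ X) ≃+ (W ⟶ Y) where
  __ := α.homToEquiv
  map_add' _ _ := add_comp ..

def Iso.homFromAddEquiv {X Y : C} (α : X ≅ Y) (W : C) : (X ⟶ W) ≃+ (Y ⟶ W) where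
  __ := α.homFromEquiv
  map_add' _ _ := comp_add ..

theorem leftComp_surjective_of_addEquiv_int {X Y : C} (ψ : (X ⟶ Y) ≃+ ℤ) :
    Surjective (leftComp Y (ψ.symm 1)) := by
  intro f
  refine ⟨ψ f • 𝟙 Y, ?_⟩
  simp [leftComp, ← map_zsmul]

variable [HasBinaryBiproducts C]

noncomputable def biprod.homToAddEquiv (W X Z : C) : (W ⟶ X ⊞ Z) ≃+ (W ⟶ X) × (W ⟶ Z) where
  toFun f := (f ≫ biprod.fst, f ≫ biprod.snd)
  invFun p := biprod.lift p.1 p.2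
  left_inv f := by ext <;> simp
  right_inv p := by simp
  map_add' f g := by simp

noncomputable def biprod.homFromAddEquiv (W X Z : C) : (X ⊞ Z ⟶ W) ≃+ (X ⟶ W) × (Z ⟶ W) where
  toFun f := (biprod.inl ≫ f, biprod.inr ≫ f)
  invFun p := biprod.desc p.1 p.2
  left_inv f := by ext <;> simp
  right_inv p := by simp
  map_add' f g := by simp

variable {X Y Z : C}

noncomputable def homToProdAddEquivOfBiprodIso (e : X ⊞ Z ≅ Y ⊞ Z) (W : C) :
    (W ⟶ X) × (W ⟶ Z) ≃+ (W ⟶ Y) × (W ⟶ Z) :=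
  (biprod.homToAddEquiv W X Z).symm.trans <| (e.homToAddEquiv W).trans (biprod.homToAddEquiv W Y Z)

noncomputable def homFromProdAddEquivOfBiprodIso (e : X ⊞ Z ≅ Y ⊞ Z) (W : C) :
    (X ⟶ W) × (Z ⟶ W) ≃+ (Y ⟶ W) × (Z ⟶ W) :=
  (biprod.homFromAddEquiv W X Z).symm.trans <|
    (e.homFromAddEquiv W).trans (biprod.homFromAddEquiv W Y Z)

theorem homToProdAddEquivOfBiprodIso_naturality (e : X ⊞ Z ≅ Y ⊞ Z) {W W' : C}
    (u : W' ⟶ W) :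
    (homToProdAddEquivOfBiprodIso e W' : _ →+ _).comp ((leftComp X u).prodMap (leftComp Z u)) =
      ((leftComp Y u).prodMap (leftComp Z u)).comp (homToProdAddEquivOfBiprodIso e W) := by
  have comp_lift (a : W ⟶ X) (b : W ⟶ Z) : biprod.lift (u ≫ a) (u ≫ b) = u ≫ biprod.lift a b := by
    ext <;> simp
  ext p <;> simp [homToProdAddEquivOfBiprodIso, biprod.homToAddEquiv, Iso.homToAddEquiv, leftComp,
    comp_lift]

theorem leftComp_surjective_of_biprod_iso [AddGroup.FG (X ⟶ X)] [AddGroup.FG (X ⟶ Z)]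
    (e : X ⊞ Z ≅ Y ⊞ Z) (u : X ⟶ Y) (hY : Surjective (leftComp Y u)) : Surjective (leftComp X u) :=
  AddMonoidHom.surjective_of_prodMap_conj _ _
    (homToProdAddEquivOfBiprodIso_naturality e u) hY

end CategoryTheory

/-- In an additive category with finitely generated Hom groups, if `End(X) ≅ ℤ`
then any object stably isomorphic to `X` is isomorphic to `X`. -/
theorem stmt_5 {A : Type*} [Category A] [Preadditive A] [HasFiniteBiproducts A]
    (hfg : ∀ X Y : A, AddGroup.FG (X ⟶ Y))
    (X : A) (hX : Nonempty (End X ≃+* ℤ))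
    (Y Z : A) (e : X ⊞ Z ≅ Y ⊞ Z) :
    Nonempty (X ≅ Y) := by
  obtain ⟨χ⟩ := hX
  obtain ⟨ψ⟩ : Nonempty ((X ⟶ Y) ≃+ ℤ) := AddCommGroup.nonempty_addEquiv_of_prod_addEquiv_prod <|
    (homToProdAddEquivOfBiprodIso e X).symm.trans (χ.toAddEquiv.prodCongr (AddEquiv.refl _))
  obtain ⟨ω⟩ : Nonempty ((Y ⟶ Y) ≃+ ℤ) := AddCommGroup.nonempty_addEquiv_of_prod_addEquiv_prod <|
    (homFromProdAddEquivOfBiprodIso e Y).symm.trans (ψ.prodCongr (AddEquiv.refl _))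
  set u := ψ.symm 1
  have hsurj : Surjective (leftComp Y u) := leftComp_surjective_of_addEquiv_int ψ
  have hinj := (leftComp Y u).injective_of_surjective_of_addEquiv hsurj (ω.trans ψ.symm)
  obtain ⟨v, hv : u ≫ v = 𝟙 X⟩ := leftComp_surjective_of_biprod_iso e u hsurj (𝟙 X)
  refine ⟨⟨u, v, hv, hinj ?_⟩⟩
  simp [leftComp, reassoc_of% hv]
end

section
/- Let φ : A → B be a surjective homomorphism of (unital, possibly noncommutative) artinian rings. Then the induced group homomorphism on groups of units φ× : A× → B× is surjective. -/
/-!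
Lift a unit `b` of `B` to some `a ∈ A`. Right multiplication by `a` is an endomorphism of `A`
as a left module over itself, and `A` has finite length (Hopkins–Levitzki), so Fitting's lemma
gives `A = K ⊕ I` with `K = {x | x * a ^ n = 0}` and `I = A * a ^ n`. On `K` the map is
nilpotent and on `I` it is injective, so adding the projection onto `K` — right multiplication
by the `K`-component `e` of `1` — yields an injective map: `a + e` is right regular, hence a
unit of the artinian ring `A`. Finally `φ e * b ^ n = φ (e * a ^ n) = 0`, so `φ e = 0` and
`a + e` lifts `b`.
-/

open LinearMap

namespace Module.End

variable {R M : Type*} [Ring R] [AddCommGroup M] [Module R M]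

theorem pow_apply_of_apply_eq_neg {f : Module.End R M} {x : M} (hx : f x = -x) (m : ℕ) :
    (f ^ m) x = (-1 : R) ^ m • x := by
  induction m with
  | zero => simp
  | succ m ih =>
    rw [pow_succ, mul_apply, hx, map_neg, ih, pow_succ, mul_smul, neg_one_smul, smul_neg]

theorem injective_add_projection_ker_pow (f : Module.End R M) {n : ℕ} (hn : n ≠ 0)
    (h : IsCompl (ker (f ^ n)) (range (f ^ n))) :
    Function.Injective ⇑(f + (ker (f ^ n)).projection (range (f ^ n)) h) := by
  have hcomm : f * f ^ n = f ^ n * f := (Commute.self_pow f n).eq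
  have mapsTo_ker : ∀ x ∈ ker (f ^ n), f x ∈ ker (f ^ n) := fun x hx => by
    rw [mem_ker, ← mul_apply, ← hcomm, mul_apply, mem_ker.mp hx, map_zero]
  have mapsTo_range : ∀ x ∈ range (f ^ n), f x ∈ range (f ^ n) := by
    rintro _ ⟨y, rfl⟩
    exact ⟨f y, by rw [← mul_apply, ← hcomm, mul_apply]⟩
  have ker_le : ker f ≤ ker (f ^ n) := by
    simpa using f.iterateKer.monotone (Nat.one_le_iff_ne_zero.mpr hn)
  have eq_zero : ∀ x ∈ ker (f ^ n), x ∈ range (f ^ n) → x = 0 :=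
    Submodule.disjoint_def.mp h.disjoint
  rw [injective_iff_map_eq_zero]
  intro x hx
  set k := (ker (f ^ n)).projection (range (f ^ n)) h x
  have hk_ker : k ∈ ker (f ^ n) := Submodule.projection_apply_mem h x
  have hj_range : x - k ∈ range (f ^ n) := Submodule.sub_projection_mem h x
  have hsplit : f (x - k) = -(f k + k) := by
    have hx' : f x + k = 0 := hx
    rw [map_sub, eq_neg_iff_add_eq_zero, ← hx']
    abel
  have hfj : f (x - k) = 0 :=
    eq_zero _ (hsplit ▸ neg_mem (add_mem (mapsTo_ker k hk_ker) hk_ker)) (mapsTo_range _ hj_range)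
  have hj : x - k = 0 := eq_zero _ (ker_le hfj) hj_range
  have hk : k = 0 := by
    have hfk : f k = -k := by rwa [hfj, eq_comm, neg_eq_zero, add_eq_zero_iff_eq_neg] at hsplit
    have := mem_ker.mp hk_ker
    rwa [pow_apply_of_apply_eq_neg hfk, (isUnit_neg_one.pow n).smul_eq_zero] at this
  rwa [hk, sub_zero] at hj

end Module.End

namespace IsArtinianRing

variable {A : Type*} [Ring A] [IsArtinianRing A]

theorem exists_mul_pow_eq_zero_and_isUnit_add (a : A) :
    ∃ e : A, ∃ n : ℕ, e * a ^ n = 0 ∧ IsUnit (a + e) := by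
  set f : Module.End A A := RingEquiv.moduleEndSelf A (MulOpposite.op a)
  obtain ⟨n, h, hn⟩ := (f.eventually_isCompl_ker_pow_range_pow.and
    (Filter.eventually_ne_atTop 0)).exists
  set g := f + (ker (f ^ n)).projection (range (f ^ n)) h
  set e := (ker (f ^ n)).projection (range (f ^ n)) h 1
  have hfpow : ∀ x, (f ^ n) x = x * a ^ n := fun x => by
    rw [← map_pow, ← MulOpposite.op_pow]
    rfl
  have hg : ∀ x, g x = x * (a + e) := fun x =>
    calc g x = g (x • 1) := by rw [smul_eq_mul, mul_one]
      _ = x * g 1 := map_smul g x 1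
      _ = x * (a + e) := by simp [g, f, e]
  refine ⟨e, n, ?_, isUnit_iff_isRightRegular.mpr fun x y hxy => ?_⟩
  · rw [← hfpow]
    exact Submodule.projection_apply_mem h 1
  · refine Module.End.injective_add_projection_ker_pow f hn h ?_
    exact (hg x).trans (hxy.trans (hg y).symm)

end IsArtinianRing

theorem stmt_6_general {A B : Type*} [Ring A] [Ring B] [IsArtinianRing A]
    (φ : A →+* B) (hφ : Function.Surjective φ) :
    Function.Surjective (Units.map (φ : A →* B)) := by
  intro β
  obtain ⟨a, ha⟩ := hφ β
  obtain ⟨e, n, hea, hunit⟩ := IsArtinianRing.exists_mul_pow_eq_zero_and_isUnit_add a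
  have hφe : φ e = 0 := by
    rw [← (β.isUnit.pow n).mul_left_eq_zero, ← ha, ← map_pow, ← map_mul, hea, map_zero]
  refine ⟨hunit.unit, Units.ext ?_⟩
  simp [ha, hφe]

/-- A surjective homomorphism of artinian rings induces a surjection on groups
of units. -/
theorem stmt_6 {A B : Type*} [Ring A] [Ring B] [IsArtinianRing A] [IsArtinianRing B]
    (φ : A →+* B) (hφ : Function.Surjective φ) :
    Function.Surjective (Units.map (φ : A →* B)) :=
  stmt_6_general φ hφ
end

section
/- Let f : R → S be a surjective homomorphism of unital rings such that: (i) R is finitely generated as an abelian group; (ii) the kernel I = ker(f) is finite; (iii) f is a split surjection in the category of abelian groups, i.e., there is an additive group homomorphism s : S → R with f ∘ s = id_S. Then the induced group homomorphism on units f× : R× → S× is surjective. -/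
/-!
Let `n` be the order of the kernel `I` of `f` and `J = nR`. Then `nI = 0` gives `IJ = JI = 0`,
and `R/J` is finite, being a finitely generated abelian group killed by `n`. An element of `R`
that is a unit both modulo `I` and modulo `J` is then a unit of `R`. Given a unit `ξ = f a` of
`S`, some power `ε = āᵐ` of the image `ā` of `a` in the finite ring `R/J` is idempotent;
modifying `a` by an element of `I` that lifts `1 - ε` gives a lift `A` of `ξ` with image
`ā + (1 - ā)(1 - ε) = ā ε + (1 - ε)` in `R/J`, which is a unit there.
-/

open Polynomial

theorem exists_isIdempotentElem_pow {M : Type*} [Monoid M] [Finite M] (x : M) :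
    ∃ m, 0 < m ∧ IsIdempotentElem (x ^ m) := by
  obtain ⟨i, j, hij, h⟩ := Finite.exists_ne_map_eq_of_infinite (x ^ · : ℕ → M)
  wlog hlt : i < j generalizing i j
  · exact this j i hij.symm h.symm (by omega)
  obtain ⟨p, rfl⟩ : ∃ p, j = i + (p + 1) := ⟨j - i - 1, by omega⟩
  have periodic : ∀ l, x ^ (i + l * (p + 1)) = x ^ i := by
    intro l
    induction l with
    | zero => simp
    | succ l ih => rw [add_one_mul, ← add_assoc, pow_add, ih, ← pow_add, ← h]
  refine ⟨(i + 1) * (p + 1), by positivity, ?_⟩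
  rw [IsIdempotentElem, ← pow_add,
    show (i + 1) * (p + 1) + (i + 1) * (p + 1) = (i * p + p + 1) + (i + (i + 1) * (p + 1)) by ring,
    pow_add, periodic, ← pow_add]
  congr 1
  ring

theorem isUnit_add_one_sub_mul_one_sub_pow {A : Type*} [Ring A] {x : A} {k : ℕ}
    (he : IsIdempotentElem (x ^ (k + 1))) : IsUnit (x + (1 - x) * (1 - x ^ (k + 1))) := by
  -- `P * Q ≡ 1` modulo `X ^ (k + 1) * X ^ (k + 1) - X ^ (k + 1)`, which vanishes at `x`
  have hx : ∀ p q : ℤ[X],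
      p * q = 1 + (X ^ (k + 1) + 2 - X ^ k - X) * (X ^ (k + 1) * X ^ (k + 1) - X ^ (k + 1)) →
      aeval x p * aeval x q = 1 := by
    intro p q hpq
    rw [← map_mul, hpq]
    simp [he.eq]
  let P : ℤ[X] := X + (1 - X) * (1 - X ^ (k + 1))
  let Q : ℤ[X] := 1 - X ^ (k + 1) + X ^ k * X ^ (k + 1)
  refine ⟨⟨aeval x P, aeval x Q, hx P Q (by ring), hx Q P (by ring)⟩, ?_⟩
  simp [P]

theorem isUnit_of_mul_sub_one_mul_eq_zero {R : Type*} [Ring R] {a b c : R}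
    (hr : (a * b - 1) * (a * c - 1) = 0) (hl : (c * a - 1) * (b * a - 1) = 0) : IsUnit a := by
  have right : a * (b + c - b * a * c) = 1 := by
    rw [← sub_zero (1 : R), ← hr]; noncomm_ring
  have left : (b + c - c * a * b) * a = 1 := by
    rw [← sub_zero (1 : R), ← hl]; noncomm_ring
  exact ⟨⟨a, _, right, left_inv_eq_right_inv left right ▸ left⟩, rfl⟩

theorem exists_mul_sub_one_mem_ker_of_isUnit {R S : Type*} [Ring R] [Ring S] {f : R →+* S}
    (hf : Function.Surjective f) {a : R} (ha : IsUnit (f a)) :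
    ∃ b, a * b - 1 ∈ RingHom.ker f ∧ b * a - 1 ∈ RingHom.ker f := by
  obtain ⟨u, hu⟩ := ha
  obtain ⟨b, hb⟩ := hf ↑u⁻¹
  exact ⟨b, by simp [RingHom.mem_ker, ← hu, hb], by simp [RingHom.mem_ker, ← hu, hb]⟩

theorem isUnit_of_isUnit_map_of_ker_mul_ker {R S T : Type*} [Ring R] [Ring S] [Ring T]
    {f : R →+* S} {g : R →+* T} (hf : Function.Surjective f) (hg : Function.Surjective g)
    (hfg : ∀ x ∈ RingHom.ker f, ∀ y ∈ RingHom.ker g, x * y = 0)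
    (hgf : ∀ x ∈ RingHom.ker g, ∀ y ∈ RingHom.ker f, x * y = 0)
    {a : R} (hfa : IsUnit (f a)) (hga : IsUnit (g a)) : IsUnit a := by
  obtain ⟨b, hb₁, hb₂⟩ := exists_mul_sub_one_mem_ker_of_isUnit hf hfa
  obtain ⟨c, hc₁, hc₂⟩ := exists_mul_sub_one_mem_ker_of_isUnit hg hga
  exact isUnit_of_mul_sub_one_mul_eq_zero (hfg _ hb₁ _ hc₁) (hgf _ hc₂ _ hb₂)

theorem Units.map_surjective_of_finite_quotient {R S : Type*} [Ring R] [Ring S]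
    {f : R →+* S} (hf : Function.Surjective f) (J : Ideal R) [J.IsTwoSided] [Finite (R ⧸ J)]
    (hfJ : ∀ x ∈ RingHom.ker f, ∀ y ∈ J, x * y = 0)
    (hJf : ∀ x ∈ J, ∀ y ∈ RingHom.ker f, x * y = 0) :
    Function.Surjective (Units.map (f : R →* S)) := by
  intro ξ
  obtain ⟨a, ha⟩ := hf ξ
  obtain ⟨b, hb⟩ := hf ↑ξ⁻¹
  obtain ⟨_ | k, hk, hidem⟩ := exists_isIdempotentElem_pow (Ideal.Quotient.mk J a)
  · cases hk
  -- `e` lifts the idempotent `1 - (a mod J) ^ (k + 1)` of `R ⧸ J` to the kernel of `f`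
  set e := 1 - a ^ (k + 1) - (a ^ (k + 1) - a ^ (k + 1) * a ^ (k + 1)) * b ^ (k + 1)
  have he_ker : f e = 0 := by
    have hfa : f (a ^ (k + 1)) = ↑(ξ ^ (k + 1)) := by rw [map_pow, ha, Units.val_pow_eq_pow_val]
    have hfb : f (b ^ (k + 1)) = ↑(ξ ^ (k + 1))⁻¹ := by
      rw [map_pow, hb, ← Units.val_pow_eq_pow_val, inv_pow]
    simp only [e, map_sub, map_mul, map_one, hfa, hfb, sub_mul, mul_assoc, Units.mul_inv, mul_one]
    abel
  have he_J : Ideal.Quotient.mk J e = 1 - Ideal.Quotient.mk J a ^ (k + 1) := by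
    simp [e, hidem.eq]
  have hA : f (a + (1 - a) * e) = ξ := by simp [he_ker, ha]
  have hAJ := isUnit_add_one_sub_mul_one_sub_pow hidem
  rw [← he_J, ← map_one (Ideal.Quotient.mk J), ← map_sub, ← map_mul, ← map_add] at hAJ
  have hunit := isUnit_of_isUnit_map_of_ker_mul_ker hf Ideal.Quotient.mk_surjective
    (by rwa [Ideal.mk_ker]) (by rwa [Ideal.mk_ker]) (hA ▸ ξ.isUnit) hAJ
  exact ⟨hunit.unit, Units.ext hA⟩

section NatCastIdeal

variable {R : Type*} [Ring R]

instance Ideal.isTwoSided_span_natCast (n : ℕ) : (Ideal.span {(n : R)}).IsTwoSided := by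
  refine ⟨fun b ha ↦ ?_⟩
  obtain ⟨a, rfl⟩ := Ideal.mem_span_singleton'.1 ha
  exact Ideal.mem_span_singleton'.2
    ⟨a * b, by rw [mul_assoc, ← (Nat.cast_commute n b).eq, mul_assoc]⟩

theorem finite_quotient_span_natCast [AddGroup.FG R] {n : ℕ} (hn : n ≠ 0) :
    Finite (R ⧸ Ideal.span {(n : R)}) := by
  let J := Ideal.span {(n : R)}
  have : AddGroup.FG (R ⧸ J) :=
    AddGroup.fg_of_surjective (f := J.mkQ.toAddMonoidHom) J.mkQ_surjective
  refine AddCommGroup.finite_of_fg_isAddTorsion _ fun x ↦ ?_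
  obtain ⟨r, rfl⟩ := J.mkQ_surjective x
  refine isOfFinAddOrder_iff_nsmul_eq_zero.2 ⟨n, Nat.pos_of_ne_zero hn, ?_⟩
  rw [← map_nsmul, Submodule.mkQ_apply, Submodule.Quotient.mk_eq_zero, nsmul_eq_mul']
  exact Ideal.mem_span_singleton'.2 ⟨r, rfl⟩

variable {n : ℕ} {I : Ideal R} {x y : R}

theorem mul_eq_zero_of_mem_span_natCast_right [I.IsTwoSided] (hI : ∀ z ∈ I, n • z = 0)
    (hx : x ∈ I) (hy : y ∈ Ideal.span {(n : R)}) : x * y = 0 := by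
  obtain ⟨a, rfl⟩ := Ideal.mem_span_singleton'.1 hy
  rw [← mul_assoc, ← nsmul_eq_mul']
  exact hI _ (I.mul_mem_right a hx)

theorem mul_eq_zero_of_mem_span_natCast_left (hI : ∀ z ∈ I, n • z = 0)
    (hx : x ∈ Ideal.span {(n : R)}) (hy : y ∈ I) : x * y = 0 := by
  obtain ⟨a, rfl⟩ := Ideal.mem_span_singleton'.1 hx
  rw [mul_assoc, ← nsmul_eq_mul, hI y hy, mul_zero]

end NatCastIdeal

theorem stmt_9_general {R S : Type*} [Ring R] [Ring S] (f : R →+* S)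
    (hsurj : Function.Surjective f)
    (hfg : AddGroup.FG R)
    (hfin : (RingHom.ker f : Set R).Finite) :
    Function.Surjective (Units.map (f : R →* S)) := by
  have : Finite (RingHom.ker f) := hfin.to_subtype
  set n := Nat.card (RingHom.ker f)
  have hn : n ≠ 0 := Nat.card_pos.ne'
  have hker : ∀ x ∈ RingHom.ker f, n • x = 0 := fun x hx ↦
    congrArg Subtype.val (card_nsmul_eq_zero' (x := (⟨x, hx⟩ : RingHom.ker f)))
  have := finite_quotient_span_natCast (R := R) hn
  exact Units.map_surjective_of_finite_quotient hsurj _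
    (fun _ hx _ hy ↦ mul_eq_zero_of_mem_span_natCast_right hker hx hy)
    (fun _ hx _ hy ↦ mul_eq_zero_of_mem_span_natCast_left hker hx hy)

/-- Let `f : R → S` be a surjective unital ring homomorphism such that `R` is a
finitely generated abelian group, the kernel of `f` is finite, and `f` splits as
a homomorphism of abelian groups. Then `f` is surjective on units. -/
theorem stmt_9 {R S : Type*} [Ring R] [Ring S] (f : R →+* S)
    (hsurj : Function.Surjective f)
    (hfg : AddGroup.FG R)
    (hfin : (RingHom.ker f : Set R).Finite)
    (hsplit : ∃ s : S →+ R, ∀ x : S, f (s x) = x) :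
    Function.Surjective (Units.map (f : R →* S)) :=
  stmt_9_general f hsurj hfg hfin
end

section
/- For any finitely generated abelian group M, the smallest cardinality of a generating set of M equals the maximum over all primes p of dim_{𝔽ₚ}(M ⊗_ℤ 𝔽ₚ) (this maximum being 0 when M is trivial). -/
/-!
By the structure theorem, `M ≅ ℤ^r × ⨁ᵢ ℤ/pᵢ^eᵢ`; let `c_q` count the nontrivial summands with
`pᵢ = q`. Reducing mod `q` maps `M` onto `𝔽_q^(r + c_q)`, so `dim (𝔽_q ⊗ M) ≥ r + c_q`. On the
other hand, the nontrivial cyclic summands can be coloured with `max_q c_q` colours so that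
summands of equal colour belong to distinct primes; their orders are then pairwise coprime, so by
Bézout the sum of the generators of a colour class generates each summand in it. With a basis of
`ℤ^r` this gives `r + max_q c_q` generators of `M`. Conversely, every generating set of `M` spans
`𝔽_q ⊗ M`.
-/

open TensorProduct DirectSum Finset Function Module

section Generation

variable {G : Type*} [AddCommGroup G]

theorem mem_zmultiples_add_of_coprime {y z : G} {m n : ℕ} (hy : m • y = 0) (hz : n • z = 0)
    (hmn : m.Coprime n) : y ∈ AddSubgroup.zmultiples (y + z) := by
  have hbezout : ((n.gcd m : ℕ) : ℤ) = n * n.gcdA m + m * n.gcdB m := Nat.gcd_eq_gcd_ab n m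
  rw [hmn.symm.gcd_eq_one, Nat.cast_one] at hbezout
  refine ⟨n * n.gcdA m, ?_⟩
  have hy' : (m : ℤ) • y = 0 := by rw [natCast_zsmul, hy]
  have hz' : (n : ℤ) • z = 0 := by rw [natCast_zsmul, hz]
  calc (n * n.gcdA m : ℤ) • (y + z)
      = (n * n.gcdA m + m * n.gcdB m : ℤ) • y := by
        rw [smul_add, add_smul, mul_comm (n : ℤ), mul_smul _ (n : ℤ) z, hz', smul_zero, add_zero,
          mul_comm (m : ℤ), mul_smul _ (m : ℤ) y, hy', smul_zero, add_zero]
    _ = y := by rw [← hbezout, one_smul]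

theorem mem_zmultiples_sum_of_pairwise_coprime {ι : Type*} [DecidableEq ι] {s : Finset ι}
    {x : ι → G} {n : ι → ℕ} (hx : ∀ i ∈ s, n i • x i = 0)
    (hn : (s : Set ι).Pairwise (Nat.Coprime on n)) {i : ι} (hi : i ∈ s) :
    x i ∈ AddSubgroup.zmultiples (∑ j ∈ s, x j) := by
  rw [← add_sum_erase s x hi]
  refine mem_zmultiples_add_of_coprime (hx i hi) (n := ∏ j ∈ s.erase i, n j) ?_ ?_
  · refine smul_sum.trans (sum_eq_zero fun j hj => ?_)
    obtain ⟨c, hc⟩ := dvd_prod_of_mem n hj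
    rw [hc, mul_comm, mul_smul, hx j (mem_of_mem_erase hj), smul_zero]
  · exact Nat.Coprime.prod_right fun j hj =>
      hn hi (mem_of_mem_erase hj) (ne_of_mem_erase hj).symm

end Generation

theorem DirectSum.closure_range_of_one_eq_top {ι : Type*} [DecidableEq ι] (n : ι → ℕ) :
    AddSubgroup.closure (Set.range fun i => of (fun i => ZMod (n i)) i 1) = ⊤ := by
  rw [eq_top_iff]
  rintro x -
  induction x using DirectSum.induction_on with
  | zero => exact zero_mem _
  | of i b =>
    obtain ⟨k, rfl⟩ := ZMod.intCast_surjective b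
    rw [← zsmul_one, map_zsmul]
    exact zsmul_mem (AddSubgroup.subset_closure (Set.mem_range_self i)) k
  | add x y hx hy => exact add_mem hx hy

theorem AddGroup.rank_directSum_zmod_le {ι κ : Type*} [Fintype ι] [DecidableEq ι] [DecidableEq κ]
    {n : ι → ℕ} [AddGroup.FG (⨁ i, ZMod (n i))] (σ : ι → κ) (C : Finset κ)
    (hσC : ∀ i, n i ≠ 1 → σ i ∈ C) (hσ : ∀ i j, σ i = σ j → i ≠ j → (n i).Coprime (n j)) :
    AddGroup.rank (⨁ i, ZMod (n i)) ≤ #C := by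
  let g : κ → ⨁ i, ZMod (n i) := fun c => ∑ i with σ i = c, of _ i 1
  refine (AddGroup.rank_le (S := C.image g) ?_).trans card_image_le
  rw [eq_top_iff, ← DirectSum.closure_range_of_one_eq_top n, AddSubgroup.closure_le]
  rintro _ ⟨i, rfl⟩
  by_cases hi : n i = 1
  · have : (1 : ZMod (n i)) = 0 := by rw [← Nat.cast_one, ZMod.natCast_eq_zero_iff, hi]
    simp only [this, map_zero, SetLike.mem_coe, zero_mem]
  · have hg : g (σ i) ∈ AddSubgroup.closure (C.image g : Set _) :=
      AddSubgroup.subset_closure (mem_image_of_mem g (hσC i hi))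
    refine AddSubgroup.zmultiples_le_of_mem hg (mem_zmultiples_sum_of_pairwise_coprime
      (n := n) (fun j _ => ?_) (fun j hj k hk hjk => ?_) (by simp))
    · rw [← map_nsmul, nsmul_eq_mul, mul_one, ZMod.natCast_self, map_zero]
    · simp only [coe_filter, mem_univ, true_and, Set.mem_ofPred_eq] at hj hk
      exact hσ j k (hj.trans hk.symm) hjk

theorem exists_injective_prodMk_fin {α β : Type*} [Fintype α] [DecidableEq β] (f : α → β) {k : ℕ}
    (hk : ∀ b, #{a | f a = b} ≤ k) : ∃ g : α → Fin k, Injective fun a => (f a, g a) := by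
  have emb : ∀ b, {a // f a = b} ↪ Fin k := fun b =>
    (Function.Embedding.nonempty_of_card_le (by simpa [Fintype.card_subtype] using hk b)).some
  refine ⟨fun a => emb (f a) ⟨a, rfl⟩, fun a a' h => ?_⟩
  obtain ⟨hf, hg⟩ := Prod.mk.inj h
  have key : ∀ b (h : f a' = b), emb (f a') ⟨a', rfl⟩ = emb b ⟨a', h⟩ := by rintro b rfl; rfl
  exact congrArg Subtype.val ((emb (f a)).injective (hg.trans (key _ hf.symm)))

theorem AddGroup.rank_directSum_zmod_prime_pow_le {ι : Type*} [Fintype ι] [DecidableEq ι]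
    {p e : ι → ℕ} (hp : ∀ i, (p i).Prime) [AddGroup.FG (⨁ i, ZMod (p i ^ e i))] {k : ℕ}
    (hk : ∀ q, #{i | p i = q ∧ e i ≠ 0} ≤ k) :
    AddGroup.rank (⨁ i, ZMod (p i ^ e i)) ≤ k := by
  obtain ⟨g, hg⟩ := exists_injective_prodMk_fin (fun i : {i // e i ≠ 0} => p i) (k := k)
    fun q => (card_le_card_of_injOn Subtype.val (fun i hi => by simp_all [i.2])
      Subtype.val_injective.injOn).trans (hk q)
  let σ : ι → ℕ := fun i => if h : e i ≠ 0 then g ⟨i, h⟩ else 0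
  refine (AddGroup.rank_directSum_zmod_le σ (range k) (fun i hi => ?_)
    (fun i j hij hne => ?_)).trans (card_range k).le
  · have he : e i ≠ 0 := by rintro h; simp [h] at hi
    simp [σ, he]
  · by_cases hi : e i = 0
    · simp [hi]
    by_cases hj : e j = 0
    · simp [hj]
    refine Nat.Coprime.pow _ _ ((Nat.coprime_primes (hp i) (hp j)).mpr fun hpij => hne ?_)
    have hgij : g ⟨i, hi⟩ = g ⟨j, hj⟩ := Fin.ext (by simpa [σ, hi, hj] using hij)
    exact congrArg Subtype.val (@hg ⟨i, hi⟩ ⟨j, hj⟩ (Prod.ext hpij hgij))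

theorem AddGroup.rank_prod_le {G H : Type*} [AddGroup G] [AddGroup H] [AddGroup.FG G]
    [AddGroup.FG H] [AddGroup.FG (G × H)] :
    AddGroup.rank (G × H) ≤ AddGroup.rank G + AddGroup.rank H := by
  classical
  obtain ⟨S, hScard, hS⟩ := AddGroup.rank_spec G
  obtain ⟨T, hTcard, hT⟩ := AddGroup.rank_spec H
  refine (AddGroup.rank_le (S := S.image (AddMonoidHom.inl G H) ∪ T.image (AddMonoidHom.inr G H))
    ?_).trans ((card_union_le _ _).trans ?_)
  · rw [eq_top_iff]
    rintro ⟨x, y⟩ -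
    have hx : (x, (0 : H)) ∈ (AddSubgroup.closure (S : Set G)).map (AddMonoidHom.inl G H) :=
      ⟨x, hS ▸ trivial, rfl⟩
    have hy : ((0 : G), y) ∈ (AddSubgroup.closure (T : Set H)).map (AddMonoidHom.inr G H) :=
      ⟨y, hT ▸ trivial, rfl⟩
    rw [AddMonoidHom.map_closure] at hx hy
    rw [← add_zero x, ← zero_add y, ← Prod.mk_add_mk, coe_union, coe_image, coe_image]
    exact add_mem (AddSubgroup.closure_mono Set.subset_union_left hx)
      (AddSubgroup.closure_mono Set.subset_union_right hy)
  · rw [← hScard, ← hTcard]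
    exact add_le_add card_image_le card_image_le

theorem AddGroup.rank_finsupp_int_le (ι : Type*) [Fintype ι] [AddGroup.FG (ι →₀ ℤ)] :
    AddGroup.rank (ι →₀ ℤ) ≤ Fintype.card ι := by
  classical
  refine (AddGroup.rank_le (S := univ.image fun i => Finsupp.single i 1) ?_).trans card_image_le
  rw [← AddSubgroup.toIntSubmodule.injective.eq_iff, AddSubgroup.toIntSubmodule_closure, coe_image,
    coe_univ, Set.image_univ]
  simpa using (Finsupp.basisSingleOne (R := ℤ) (ι := ι)).span_eq

section TensorZMod

variable {M : Type*} [AddCommGroup M] (q : ℕ) [Fact (1 < q)]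

theorem finrank_tensor_zmod_le_card_of_closure_eq_top {S : Finset M}
    (hS : AddSubgroup.closure (S : Set M) = ⊤) :
    finrank (ZMod q) (ZMod q ⊗[ℤ] M) ≤ #S := by
  classical
  have hspan : Submodule.span (ZMod q)
      (S.image (TensorProduct.mk ℤ (ZMod q) M 1) : Set (ZMod q ⊗[ℤ] M)) = ⊤ := by
    rw [coe_image, ← Submodule.baseChange_span, ← AddSubgroup.toIntSubmodule_closure, hS, map_top,
      Submodule.baseChange_top]
  have hcard :=
    finrank_span_finset_le_card (R := ZMod q) (S.image (TensorProduct.mk ℤ (ZMod q) M 1))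
  rw [Set.finrank, hspan, finrank_top] at hcard
  exact hcard.trans card_image_le

theorem finrank_le_finrank_tensor_zmod_of_surjective [Module.Finite ℤ M] {V : Type*}
    [AddCommGroup V] [Module (ZMod q) V] {f : M →+ V} (hf : Surjective f) :
    finrank (ZMod q) V ≤ finrank (ZMod q) (ZMod q ⊗[ℤ] M) := by
  refine LinearMap.finrank_le_finrank_of_surjective
    (f := f.toIntLinearMap.liftBaseChange (ZMod q)) fun v => ?_
  obtain ⟨m, rfl⟩ := hf v
  exact ⟨(1 : ZMod q) ⊗ₜ[ℤ] m, by rw [LinearMap.liftBaseChange_tmul, one_smul]; rfl⟩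

end TensorZMod

theorem exists_surjective_directSum_zmod_pi {ι : Type*} [Fintype ι] [DecidableEq ι] {n : ι → ℕ}
    {q : ℕ} (s : Finset ι) (hs : ∀ i ∈ s, q ∣ n i) :
    ∃ F : (⨁ i, ZMod (n i)) →+ (s → ZMod q), Surjective F := by
  refine ⟨AddMonoidHom.pi fun j => (ZMod.castHom (hs j j.2) (ZMod q)).toAddMonoidHom.comp
    (DFinsupp.evalAddMonoidHom j.1), fun v => ?_⟩
  choose y hy using fun j : s => ZMod.ringHom_surjective (ZMod.castHom (hs j j.2) (ZMod q)) (v j)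
  refine ⟨DFinsupp.equivFunOnFintype.symm fun i => if h : i ∈ s then y ⟨i, h⟩ else 0,
    funext fun j => ?_⟩
  exact (congrArg _ (dif_pos j.2)).trans (hy j)

theorem exists_prime_forall_card_le {ι : Type*} [Fintype ι] {p : ι → ℕ} (hp : ∀ i, (p i).Prime)
    (P : ι → Prop) [DecidablePred P] :
    ∃ q, q.Prime ∧ ∀ q', #{i | p i = q' ∧ P i} ≤ #{i | p i = q ∧ P i} := by
  classical
  obtain ⟨q, hq, hmax⟩ := (insert 2 (univ.image p)).exists_max_image
    (fun q => #{i | p i = q ∧ P i}) (insert_nonempty _ _)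
  refine ⟨q, ?_, fun q' => ?_⟩
  · obtain rfl | hq := mem_insert.mp hq
    · exact Nat.prime_two
    · obtain ⟨i, -, rfl⟩ := mem_image.mp hq
      exact hp i
  · by_cases hq' : q' ∈ insert 2 (univ.image p)
    · exact hmax q' hq'
    · have : #{i | p i = q' ∧ P i} = 0 := card_eq_zero.mpr <| filter_eq_empty_iff.mpr
        fun i _ h => hq' (mem_insert_of_mem (mem_image.mpr ⟨i, mem_univ _, h.1⟩))
      omega

section StructureTheorem

variable {M ι : Type*} [AddCommGroup M] [Fintype ι] [DecidableEq ι] {r : ℕ} {p e : ι → ℕ}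

theorem add_card_le_finrank_tensor_zmod [Module.Finite ℤ M]
    (f : M ≃+ (Fin r →₀ ℤ) × ⨁ i, ZMod (p i ^ e i)) (q : ℕ) [Fact (1 < q)] :
    r + #{i | p i = q ∧ e i ≠ 0} ≤ finrank (ZMod q) (ZMod q ⊗[ℤ] M) := by
  set s : Finset ι := {i | p i = q ∧ e i ≠ 0}
  obtain ⟨F, hF⟩ := exists_surjective_directSum_zmod_pi (n := fun i => p i ^ e i) (q := q) s
    fun i hi => by
      obtain ⟨hpi, hei⟩ := (mem_filter.mp hi).2
      rw [← hpi]
      exact dvd_pow_self (p i) hei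
  have hsurj : Surjective ((AddMonoidHom.prodMap
      (Finsupp.mapRange.addMonoidHom (Int.castAddHom (ZMod q))) F).comp f.toAddMonoidHom) :=
    ((Finsupp.mapRange_surjective _ (map_zero _) ZMod.intCast_surjective).prodMap hF).comp
      f.surjective
  calc r + #s = finrank (ZMod q) ((Fin r →₀ ZMod q) × (s → ZMod q)) := by
        rw [finrank_prod, finrank_finsupp_self, finrank_fintype_fun_eq_card, Fintype.card_fin,
          Fintype.card_coe]
    _ ≤ finrank (ZMod q) (ZMod q ⊗[ℤ] M) := finrank_le_finrank_tensor_zmod_of_surjective q hsurj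

theorem AddGroup.rank_le_add_of_addEquiv [AddGroup.FG M]
    (f : M ≃+ (Fin r →₀ ℤ) × ⨁ i, ZMod (p i ^ e i)) (hp : ∀ i, (p i).Prime) {k : ℕ}
    (hk : ∀ q, #{i | p i = q ∧ e i ≠ 0} ≤ k) : AddGroup.rank M ≤ r + k := by
  have : AddGroup.FG ((Fin r →₀ ℤ) × ⨁ i, ZMod (p i ^ e i)) :=
    AddGroup.fg_of_surjective (f := f.toAddMonoidHom) f.surjective
  have : AddGroup.FG (Fin r →₀ ℤ) :=
    AddGroup.fg_of_surjective (f := AddMonoidHom.fst _ (⨁ i, ZMod (p i ^ e i))) Prod.fst_surjective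
  have : AddGroup.FG (⨁ i, ZMod (p i ^ e i)) :=
    AddGroup.fg_of_surjective (f := AddMonoidHom.snd (Fin r →₀ ℤ) _) Prod.snd_surjective
  calc AddGroup.rank M
      = AddGroup.rank ((Fin r →₀ ℤ) × ⨁ i, ZMod (p i ^ e i)) := AddGroup.rank_congr f
    _ ≤ AddGroup.rank (Fin r →₀ ℤ) + AddGroup.rank (⨁ i, ZMod (p i ^ e i)) :=
        AddGroup.rank_prod_le
    _ ≤ r + k := add_le_add ((AddGroup.rank_finsupp_int_le _).trans_eq (Fintype.card_fin r))
        (AddGroup.rank_directSum_zmod_prime_pow_le hp hk)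

end StructureTheorem

theorem AddGroup.exists_prime_rank_le_finrank_tensor_zmod (M : Type*) [AddCommGroup M]
    [AddGroup.FG M] : ∃ q, q.Prime ∧ AddGroup.rank M ≤ finrank (ZMod q) (ZMod q ⊗[ℤ] M) := by
  classical
  obtain ⟨r, ι, _, p, hp, e, ⟨f⟩⟩ := AddCommGroup.equiv_free_prod_directSum_zmod M
  obtain ⟨q, hq, hmax⟩ := exists_prime_forall_card_le hp (fun i => e i ≠ 0)
  have : Fact (1 < q) := ⟨hq.one_lt⟩
  have : Module.Finite ℤ M := Module.Finite.iff_addGroup_fg.mpr ‹_›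
  exact ⟨q, hq, (AddGroup.rank_le_add_of_addEquiv f hp hmax).trans
    (add_card_le_finrank_tensor_zmod f q)⟩

theorem AddGroup.rank_eq_sInf_card (G : Type*) [AddGroup G] [AddGroup.FG G] :
    AddGroup.rank G = sInf {n | ∃ S : Finset G, #S = n ∧ AddSubgroup.closure (S : Set G) = ⊤} := by
  refine (IsLeast.csInf_eq ⟨?_, ?_⟩).symm
  · exact AddGroup.rank_spec G
  rintro _ ⟨S, rfl, hS⟩
  exact AddGroup.rank_le hS

theorem AddGroup.finrank_tensor_zmod_le_rank (M : Type*) [AddCommGroup M] [AddGroup.FG M]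
    (q : ℕ) [Fact (1 < q)] : finrank (ZMod q) (ZMod q ⊗[ℤ] M) ≤ AddGroup.rank M := by
  obtain ⟨S, hcard, hS⟩ := AddGroup.rank_spec M
  exact hcard ▸ finrank_tensor_zmod_le_card_of_closure_eq_top q hS

/-- For a finitely generated abelian group `M`, the smallest cardinality of a
generating set of `M` equals the maximum over all primes `p` of
`dim_{𝔽ₚ} (M ⊗_ℤ 𝔽ₚ)` (the maximum being `0` when `M` is trivial). -/
theorem stmt_13 (M : Type*) [AddCommGroup M] (hfg : AddGroup.FG M) :
    sInf {n : ℕ | ∃ S : Finset M, S.card = n ∧ AddSubgroup.closure (S : Set M) = ⊤}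
      = sSup {d : ℕ | ∃ p : ℕ, p.Prime ∧
          d = Module.finrank (ZMod p) (ZMod p ⊗[ℤ] M)} := by
  rw [← AddGroup.rank_eq_sInf_card]
  have hle (p : ℕ) (hp : p.Prime) : finrank (ZMod p) (ZMod p ⊗[ℤ] M) ≤ AddGroup.rank M :=
    have : Fact (1 < p) := ⟨hp.one_lt⟩
    AddGroup.finrank_tensor_zmod_le_rank M p
  obtain ⟨q, hq, hge⟩ := AddGroup.exists_prime_rank_le_finrank_tensor_zmod M
  refine (IsGreatest.csSup_eq ⟨?_, ?_⟩).symm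
  · exact ⟨q, hq, hge.antisymm (hle q hq)⟩
  rintro _ ⟨p, hp, rfl⟩
  exact hle p hp
end

section
/- Let A be an additive category such that for all objects X, Y the abelian group of morphisms Hom(X, Y) is finitely generated. If X and Y are stably isomorphic objects of A (i.e., X ⊕ Z ≅ Y ⊕ Z for some object Z), then for every prime p the 𝔽ₚ-vector spaces End(X) ⊗_ℤ 𝔽ₚ and Hom(X, Y) ⊗_ℤ 𝔽ₚ have the same dimension; consequently the abelian groups End(X) and Hom(X, Y) have the same smallest number of generators. -/
open CategoryTheory CategoryTheory.Limits TensorProduct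

attribute [local instance] CategoryTheory.Limits.hasBinaryBiproducts_of_finite_biproducts

/-!
Write `δₚ(M) = dim 𝔽ₚ ⊗ M` (`modPRank p M`). The functor `Hom(X, -)` turns `⊞` into `×`, and `δₚ`
is additive (and finite) on finitely generated groups, so `X ⊞ Z ≅ Y ⊞ Z` gives
`δₚ(Hom(X, X)) + δₚ(Hom(X, Z)) = δₚ(Hom(X, Y)) + δₚ(Hom(X, Z))`; cancel `δₚ(Hom(X, Z))`.

For the minimal number of generators `d(M)` we show `d(M) = maxₚ δₚ(M)`. Clearly `δₚ(M) ≤ d(M)`.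
Conversely, write `M ≅ ℤʳ × ∏ᵢ ℤ/qᵢ^eᵢ` and let `p` maximise the number of factors of order
divisible by `p`. The factors can be sorted into `δₚ(M)` classes in each of which the orders are
pairwise coprime; by the Chinese remainder theorem each class is cyclic.
-/

noncomputable def modPRank (p : ℕ) (M : Type*) [AddCommGroup M] : ℕ :=
  Module.finrank (ZMod p) (ZMod p ⊗[ℤ] M)

section modPRank

variable (p : ℕ) {M N : Type*} [AddCommGroup M] [AddCommGroup N]

theorem modPRank_congr (e : M ≃+ N) : modPRank p M = modPRank p N :=
  (e.toIntLinearEquiv.baseChange ℤ (ZMod p) M N).finrank_eq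

variable [Fact p.Prime]

theorem modPRank_prod [AddGroup.FG M] [AddGroup.FG N] :
    modPRank p (M × N) = modPRank p M + modPRank p N := by
  rw [modPRank, (prodRight ℤ (ZMod p) (ZMod p) M N).finrank_eq, Module.finrank_prod]
  rfl

theorem modPRank_pi {ι : Type*} [Fintype ι] [DecidableEq ι] (M : ι → Type*)
    [∀ i, AddCommGroup (M i)] [∀ i, AddGroup.FG (M i)] :
    modPRank p (∀ i, M i) = ∑ i, modPRank p (M i) := by
  rw [modPRank, (piRight ℤ (ZMod p) (ZMod p) M).finrank_eq, Module.finrank_pi_fintype]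
  rfl

theorem modPRank_zmod (n : ℕ) : modPRank p (ZMod n) = if p ∣ n then 1 else 0 := by
  rw [modPRank_congr p (Int.quotientSpanNatEquivZMod n).symm.toAddEquiv, modPRank,
    ← (Algebra.TensorProduct.quotIdealMapEquivTensorQuot (ZMod p)
      (Ideal.span {(n : ℤ)})).toLinearEquiv.finrank_eq,
    Ideal.map_span, Set.image_singleton, map_natCast]
  have h := Submodule.finrank_quotient_add_finrank (Ideal.span {(n : ZMod p)})
  rw [Module.finrank_self] at h
  split_ifs with hpn
  · rw [(ZMod.natCast_eq_zero_iff n p).2 hpn, Ideal.span_singleton_eq_bot.2 rfl] at h ⊢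
    simpa using h
  · have hn : (n : ZMod p) ≠ 0 := by rwa [Ne, ZMod.natCast_eq_zero_iff]
    rw [Ideal.span, finrank_span_singleton hn] at h
    exact Nat.add_eq_right.mp h

theorem modPRank_le_rank [AddGroup.FG M] : modPRank p M ≤ AddGroup.rank M := by
  classical
  obtain ⟨S, hcard, hS⟩ := AddGroup.rank_spec M
  have hspan : Submodule.span (ZMod p) (mk ℤ (ZMod p) M 1 '' S) = ⊤ := by
    rw [← Submodule.baseChange_span, ← AddSubgroup.toIntSubmodule_closure, hS]
    exact Submodule.baseChange_top _
  have h := finrank_span_finset_le_card (R := ZMod p) (S.image (mk ℤ (ZMod p) M 1))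
  rw [Finset.coe_image, Set.finrank, hspan, finrank_top] at h
  exact h.trans (hcard ▸ Finset.card_image_le)

end modPRank

instance ZMod.addGroupFG (n : ℕ) : AddGroup.FG (ZMod n) :=
  Module.Finite.iff_addGroup_fg.mp
    (.of_surjective (Algebra.linearMap ℤ (ZMod n)) ZMod.intCast_surjective)

instance Pi.addGroupFG {ι : Type*} [Finite ι] (G : ι → Type*) [∀ i, AddCommGroup (G i)]
    [∀ i, AddGroup.FG (G i)] : AddGroup.FG (∀ i, G i) :=
  Module.Finite.iff_addGroup_fg.mp inferInstance

theorem AddGroup.rank_eq_sInf (G : Type*) [AddGroup G] [AddGroup.FG G] :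
    AddGroup.rank G =
      sInf {n : ℕ | ∃ S : Finset G, S.card = n ∧ AddSubgroup.closure (S : Set G) = ⊤} :=
  (Nat.sInf_def (s := {n : ℕ | ∃ S : Finset G, S.card = n ∧ AddSubgroup.closure (S : Set G) = ⊤})
    (AddGroup.fg_iff'.mp ‹_›)).symm

theorem ZMod.exists_intCast_eq_of_pairwise_coprime {ι : Type*} [Fintype ι] (N : ι → ℕ)
    (hN : Pairwise (Function.onFun Nat.Coprime N)) (y : ∀ i, ZMod (N i)) :
    ∃ z : ℤ, ∀ i, (z : ZMod (N i)) = y i := by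
  obtain ⟨z, hz⟩ := ZMod.intCast_surjective ((ZMod.prodEquivPi N hN).symm y)
  refine ⟨z, fun i ↦ ?_⟩
  have := congrFun (congrArg (ZMod.prodEquivPi N hN) hz) i
  rwa [map_intCast, RingEquiv.apply_symm_apply, Pi.intCast_apply] at this

/-- `k` colours the cyclic factors `ZMod (N j)` with `m` colours so that, by the Chinese remainder
theorem, each colour class has a cyclic product. -/
def IsCoprimeColoring {J : Type*} (N k : J → ℕ) (m : ℕ) : Prop :=
  (∀ j, N j ≠ 1 → k j < m) ∧ ∀ i j, i ≠ j → k i = k j → (N i).Coprime (N j)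

theorem IsCoprimeColoring.rank_pi_zmod_le {J : Type*} [Fintype J] {N k : J → ℕ} {m : ℕ}
    (hk : IsCoprimeColoring N k m) : AddGroup.rank (∀ j, ZMod (N j)) ≤ m := by
  classical
  set g : ℕ → ∀ j, ZMod (N j) := fun a j ↦ if k j = a then 1 else 0
  suffices hg : AddSubgroup.closure ((Finset.range m).image g : Set (∀ j, ZMod (N j))) = ⊤ from
    (AddGroup.rank_le hg).trans (Finset.card_image_le.trans (Finset.card_range m).le)
  refine eq_top_iff.2 fun y _ ↦ ?_
  have hcrt (a : ℕ) : ∃ z : ℤ, ∀ j, k j = a → (z : ZMod (N j)) = y j := by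
    obtain ⟨z, hz⟩ := ZMod.exists_intCast_eq_of_pairwise_coprime (fun j : {j // k j = a} ↦ N j)
      (fun i j hij ↦ hk.2 i j (Subtype.coe_injective.ne hij) (i.2.trans j.2.symm)) (fun j ↦ y j)
    exact ⟨z, fun j hj ↦ hz ⟨j, hj⟩⟩
  choose z hz using hcrt
  have hy : y = ∑ a ∈ Finset.range m, z a • g a := by
    funext j
    by_cases h1 : N j = 1
    · have : Subsingleton (ZMod (N j)) := by rw [h1]; infer_instance
      exact Subsingleton.elim _ _
    · simp [g, Finset.sum_apply, hk.1 j h1, hz]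
  rw [hy]
  exact AddSubgroup.sum_mem _ fun a ha ↦
    AddSubgroup.zsmul_mem _ (AddSubgroup.subset_closure (Finset.mem_image_of_mem g ha)) _

open Finset in
theorem exists_prime_isCoprimeColoring {ι : Type*} [Fintype ι] (r : ℕ) (q e : ι → ℕ)
    (hq : ∀ i, (q i).Prime) :
    ∃ p, p.Prime ∧ ∃ k, IsCoprimeColoring (Sum.elim (fun _ : Fin r ↦ 0) fun i ↦ q i ^ e i) k
      (r + #{i | p ∣ q i ^ e i}) := by
  set F : ℕ → Finset ι := fun p ↦ {i | p ∣ q i ^ e i}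
  obtain ⟨p, hp, hmax⟩ := exists_max_image (insert 2 (univ.image q)) (fun p ↦ #(F p))
    ⟨2, mem_insert_self _ _⟩
  classical
  have mem_F (i : ι) (hi : e i ≠ 0) : i ∈ (F (q i)).toList := by simp [F, hi]
  -- The free factors get the colours `0, …, r - 1`; a factor of order `q ^ e` with `e ≠ 0`
  -- gets `r` plus its position among the factors whose order is divisible by `q`.
  refine ⟨p, ?_, Sum.elim (fun a ↦ a) (fun i ↦ r + (F (q i)).toList.idxOf i), ?_, ?_⟩
  · rcases mem_insert.1 hp with rfl | h
    · exact Nat.prime_two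
    · obtain ⟨i, -, rfl⟩ := mem_image.1 h
      exact hq i
  · rintro (a | i) h
    · simp only [Sum.elim_inl]
      omega
    · have hei : e i ≠ 0 := by rintro h0; simp [h0] at h
      have := List.idxOf_lt_length_of_mem (mem_F i hei)
      have := hmax (q i) (mem_insert_of_mem (mem_image_of_mem _ (mem_univ _)))
      simp only [Sum.elim_inr, length_toList, F] at *
      omega
  · rintro (a | i) (b | j) hne hk <;> simp only [Sum.elim_inl, Sum.elim_inr] at hk ⊢
    · exact absurd (congrArg Sum.inl (Fin.ext hk)) hne
    · omega
    · omega
    · rcases eq_or_ne (q i) (q j) with hqij | hqij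
      · by_cases hei : e i = 0
        · simp [hei]
        by_cases hej : e j = 0
        · simp [hej]
        rw [hqij, add_right_inj, ← hqij, List.idxOf_inj (mem_F i hei)] at hk
        exact absurd (congrArg Sum.inr hk) hne
      · exact Nat.Coprime.pow _ _ ((Nat.coprime_primes (hq i) (hq j)).2 hqij)

theorem AddGroup.exists_prime_rank_le_modPRank (M : Type*) [AddCommGroup M] [AddGroup.FG M] :
    ∃ p, p.Prime ∧ AddGroup.rank M ≤ modPRank p M := by
  classical
  obtain ⟨r, ι, _, q, hq, e, ⟨φ⟩⟩ := AddCommGroup.equiv_free_prod_directSum_zmod M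
  let N := Sum.elim (fun _ : Fin r ↦ 0) fun i ↦ q i ^ e i
  let ψ : M ≃+ ∀ j, ZMod (N j) :=
    φ.trans <| (Finsupp.addEquivFunOnFinite.prodCongr (DirectSum.addEquivProd _)).trans
      (LinearEquiv.sumPiEquivProdPi ℤ _ _ fun j ↦ ZMod (N j)).toAddEquiv.symm
  obtain ⟨p, hp, k, hk⟩ := exists_prime_isCoprimeColoring r q e hq
  have : Fact p.Prime := ⟨hp⟩
  refine ⟨p, hp, ?_⟩
  rw [AddGroup.rank_congr ψ, modPRank_congr p ψ, modPRank_pi]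
  convert hk.rank_pi_zmod_le using 1
  simp only [modPRank_zmod, Fintype.sum_sum_type, Finset.card_filter]
  simp [N]
  exact (Finset.card_filter _ _).symm

theorem AddGroup.rank_eq_of_modPRank_eq {M N : Type*} [AddCommGroup M] [AddCommGroup N]
    [AddGroup.FG M] [AddGroup.FG N] (h : ∀ p, p.Prime → modPRank p M = modPRank p N) :
    AddGroup.rank M = AddGroup.rank N := by
  obtain ⟨p, hp, hM⟩ := AddGroup.exists_prime_rank_le_modPRank M
  obtain ⟨q, hq, hN⟩ := AddGroup.exists_prime_rank_le_modPRank N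
  have : Fact p.Prime := ⟨hp⟩
  have : Fact q.Prime := ⟨hq⟩
  refine le_antisymm ?_ ?_
  · calc AddGroup.rank M ≤ modPRank p M := hM
      _ = modPRank p N := h p hp
      _ ≤ AddGroup.rank N := modPRank_le_rank p
  · calc AddGroup.rank N ≤ modPRank q N := hN
      _ = modPRank q M := (h q hq).symm
      _ ≤ AddGroup.rank M := modPRank_le_rank q

section Biproduct

variable {A : Type*} [Category A] [Preadditive A] [HasBinaryBiproducts A]

noncomputable def homBiprodAddEquiv (W X Z : A) : (W ⟶ X ⊞ Z) ≃+ (W ⟶ X) × (W ⟶ Z) where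
  toFun f := (f ≫ biprod.fst, f ≫ biprod.snd)
  invFun g := biprod.lift g.1 g.2
  left_inv f := by ext <;> simp
  right_inv g := by simp
  map_add' f g := by simp

theorem modPRank_hom_eq_of_biprod_iso (p : ℕ) [Fact p.Prime] {X Y Z : A} (e : X ⊞ Z ≅ Y ⊞ Z)
    (W : A) [AddGroup.FG (W ⟶ X)] [AddGroup.FG (W ⟶ Y)] [AddGroup.FG (W ⟶ Z)] :
    modPRank p (W ⟶ X) = modPRank p (W ⟶ Y) := by
  have h := modPRank_congr p <| (homBiprodAddEquiv W X Z).symm.trans <|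
    (AddEquiv.mk' ((Iso.refl W).homCongr e) (by simp)).trans (homBiprodAddEquiv W Y Z)
  rw [modPRank_prod, modPRank_prod] at h
  omega

end Biproduct

/-- In an additive category with finitely generated Hom groups, if `X` and `Y`
are stably isomorphic then for every prime `p` the `𝔽ₚ`-vector spaces
`End(X) ⊗_ℤ 𝔽ₚ` and `Hom(X,Y) ⊗_ℤ 𝔽ₚ` have the same dimension; consequently the
abelian groups `End(X)` and `Hom(X,Y)` have the same smallest number of
generators. -/
theorem stmt_14 {A : Type*} [Category A] [Preadditive A] [HasFiniteBiproducts A]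
    (hfg : ∀ X Y : A, AddGroup.FG (X ⟶ Y))
    (X Y Z : A) (e : X ⊞ Z ≅ Y ⊞ Z) :
    (∀ p : ℕ, p.Prime →
        Module.finrank (ZMod p) (ZMod p ⊗[ℤ] (X ⟶ X))
          = Module.finrank (ZMod p) (ZMod p ⊗[ℤ] (X ⟶ Y)))
      ∧ sInf {n : ℕ | ∃ S : Finset (X ⟶ X), S.card = n ∧
            AddSubgroup.closure (S : Set (X ⟶ X)) = ⊤}
        = sInf {n : ℕ | ∃ S : Finset (X ⟶ Y), S.card = n ∧
            AddSubgroup.closure (S : Set (X ⟶ Y)) = ⊤} := by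
  have (U V : A) : AddGroup.FG (U ⟶ V) := hfg U V
  have hmod (p : ℕ) (hp : p.Prime) : modPRank p (X ⟶ X) = modPRank p (X ⟶ Y) :=
    have : Fact p.Prime := ⟨hp⟩
    modPRank_hom_eq_of_biprod_iso p e X
  refine ⟨hmod, ?_⟩
  rw [← AddGroup.rank_eq_sInf, ← AddGroup.rank_eq_sInf]
  exact AddGroup.rank_eq_of_modPRank_eq hmod
end

section
/- Let F be a number field with ring of integers 𝒪_F, and let D be a nonzero element of 𝒪_F. Consider the set M_D of all nonzero elements a ∈ F such that both D·a and D·a⁻¹ lie in 𝒪_F. Then the multiplicative action of the unit group 𝒪_F× on M_D has only finitely many orbits. -/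
/-!
If `x = D a` and `y = D a⁻¹` are integral, then `x y = D ^ 2`, so `x` divides `D ^ 2`. In a Dedekind
domain the ideal `(D ^ 2)` has finitely many ideal divisors, so `D ^ 2` has finitely many divisors
up to units, and `a = x / D` is then determined up to a unit by one of finitely many `x`.
-/

open NumberField

section

variable {R : Type*} [CommRing R] [IsDedekindDomain R]

theorem Ideal.finite_setOf_dvd {J : Ideal R} (hJ : J ≠ ⊥) : {I : Ideal R | I ∣ J}.Finite :=
  have := UniqueFactorizationMonoid.fintypeSubtypeDvd J hJ
  Set.finite_coe_iff.mp (inferInstanceAs (Finite {I // I ∣ J}))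

theorem Associates.finite_setOf_dvd_mk {d : R} (hd : d ≠ 0) :
    {q : Associates R | q ∣ Associates.mk d}.Finite := by
  let f (q : Associates R) : Ideal R := Ideal.associatesEquivIsPrincipal R q
  have hf : f.Injective := Subtype.val_injective.comp (Ideal.associatesEquivIsPrincipal R).injective
  refine ((Ideal.finite_setOf_dvd (J := Ideal.span {d}) (by simpa using hd)).preimage
    hf.injOn).subset ?_
  intro q hq
  obtain ⟨x, rfl⟩ := Associates.mk_surjective q
  simpa [f, Ideal.dvd_span_singleton, Ideal.mem_span_singleton] using hq

theorem exists_finset_associated_of_dvd {d : R} (hd : d ≠ 0) :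
    ∃ T : Finset R, ∀ x, x ∣ d → ∃ c ∈ T, Associated c x := by
  classical
  refine ⟨(Associates.finite_setOf_dvd_mk hd).toFinset.image Quot.out, fun x hx => ?_⟩
  refine ⟨Quot.out (Associates.mk x), Finset.mem_image_of_mem _ ?_, ?_⟩
  · exact (Set.Finite.mem_toFinset _).mpr (Associates.mk_dvd_mk.mpr hx)
  · exact Associates.mk_eq_mk_iff_associated.mp (Associates.quot_out _)

theorem exists_finset_eq_unit_mul_of_mul_mem_range {K : Type*} [Field K] [Algebra R K]
    [IsFractionRing R K] {D : R} (hD : D ≠ 0) :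
    ∃ T : Finset K, ∀ a : K, a ≠ 0 →
      algebraMap R K D * a ∈ Set.range (algebraMap R K) →
      algebraMap R K D * a⁻¹ ∈ Set.range (algebraMap R K) →
      ∃ b ∈ T, ∃ u : Rˣ, a = algebraMap R K u * b := by
  classical
  obtain ⟨T, hT⟩ := exists_finset_associated_of_dvd (pow_ne_zero 2 hD)
  have hD' : algebraMap R K D ≠ 0 := IsFractionRing.to_map_eq_zero_iff.not.mpr hD
  refine ⟨T.image fun c => algebraMap R K c / algebraMap R K D, fun a ha ⟨x, hx⟩ ⟨y, hy⟩ => ?_⟩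
  have hxy : x * y = D ^ 2 := IsFractionRing.injective R K <| by
    rw [map_mul, map_pow, hx, hy]
    field_simp
  obtain ⟨c, hcT, u, rfl⟩ := hT x ⟨y, hxy.symm⟩
  refine ⟨_, Finset.mem_image_of_mem _ hcT, u, ?_⟩
  rw [map_mul] at hx
  field_simp
  linear_combination hx.symm

end

/-- Let `F` be a number field with ring of integers `𝓞 F` and let `D ≠ 0` be an
algebraic integer.  The set `M_D` of nonzero `a ∈ F` with `D·a` and `D·a⁻¹`
integral has only finitely many orbits under the multiplicative action of the
unit group `(𝓞 F)ˣ`. -/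
theorem stmt_15 (F : Type*) [Field F] [NumberField F] (D : 𝓞 F) (hD : D ≠ 0) :
    ∃ T : Finset F, ∀ a : F, a ≠ 0 →
      (algebraMap (𝓞 F) F D * a) ∈ Set.range (algebraMap (𝓞 F) F) →
      (algebraMap (𝓞 F) F D * a⁻¹) ∈ Set.range (algebraMap (𝓞 F) F) →
      ∃ b ∈ T, ∃ u : (𝓞 F)ˣ, a = algebraMap (𝓞 F) F (u : 𝓞 F) * b :=
  exists_finset_eq_unit_mul_of_mul_mem_range hD
end

section
/- Let F be a number field with ring of integers 𝒪_F, and let D be a nonzero element of 𝒪_F. Consider the set M_D of all nonzero elements a ∈ F such that both D·a and D·a⁻¹ lie in 𝒪_F. Then the multiplicative action on M_D of the subgroup (𝒪_F×)² of squares of units has only finitely many orbits. -/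
open NumberField

/-- Let `F` be a number field with ring of integers `𝓞 F` and let `D ≠ 0` be an
algebraic integer.  The set `M_D` of nonzero `a ∈ F` with `D·a` and `D·a⁻¹`
integral has only finitely many orbits under the multiplicative action of the
subgroup `((𝓞 F)ˣ)²` of squares of units. -/
theorem stmt_16 (F : Type*) [Field F] [NumberField F] (D : 𝓞 F) (hD : D ≠ 0) :
    ∃ T : Finset F, ∀ a : F, a ≠ 0 →
      (algebraMap (𝓞 F) F D * a) ∈ Set.range (algebraMap (𝓞 F) F) →
      (algebraMap (𝓞 F) F D * a⁻¹) ∈ Set.range (algebraMap (𝓞 F) F) →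
      ∃ b ∈ T, ∃ u : (𝓞 F)ˣ, a = algebraMap (𝓞 F) F ((u * u : (𝓞 F)ˣ) : 𝓞 F) * b := by
  classical
  -- the subgroup of squares of units
  let H : Subgroup (𝓞 F)ˣ := (powMonoidHom 2 : (𝓞 F)ˣ →* (𝓞 F)ˣ).range
  haveI : Group.FG (𝓞 F)ˣ := Group.fg_iff_monoid_fg.mpr inferInstance
  haveI hQfin : Finite ((𝓞 F)ˣ ⧸ H) := by
    haveI : Group.FG ((𝓞 F)ˣ ⧸ H) :=
      Group.fg_of_surjective (f := QuotientGroup.mk' H) (QuotientGroup.mk'_surjective H)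
    refine CommGroup.finite_of_fg_torsion _ (fun q => ?_)
    refine isOfFinOrder_iff_pow_eq_one.mpr ⟨2, two_pos, ?_⟩
    obtain ⟨u, rfl⟩ := QuotientGroup.mk_surjective q
    rw [← QuotientGroup.mk_pow]
    exact (QuotientGroup.eq_one_iff _).mpr ⟨u, rfl⟩
  have hDD : Ideal.span ({D * D} : Set (𝓞 F)) ≠ 0 := by
    rw [Ne, Ideal.zero_eq_bot, Ideal.span_singleton_eq_bot]
    exact mul_ne_zero hD hD
  haveI : Fintype {J : Ideal (𝓞 F) // J ∣ Ideal.span ({D * D} : Set (𝓞 F))} :=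
    UniqueFactorizationMonoid.fintypeSubtypeDvd _ hDD
  haveI : Fintype ((𝓞 F)ˣ ⧸ H) := Fintype.ofFinite _
  let g : {J : Ideal (𝓞 F) // J ∣ Ideal.span ({D * D} : Set (𝓞 F))} → 𝓞 F := fun J =>
    if h : ∃ z : 𝓞 F, J.1 = Ideal.span {z} then h.choose else 1
  let f : {J : Ideal (𝓞 F) // J ∣ Ideal.span ({D * D} : Set (𝓞 F))} × ((𝓞 F)ˣ ⧸ H) → F :=
    fun p => algebraMap (𝓞 F) F (g p.1 * ((Quot.out p.2 : (𝓞 F)ˣ) : 𝓞 F)) /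
      algebraMap (𝓞 F) F D
  refine ⟨Finset.image f Finset.univ, ?_⟩
  intro a ha hxa hya
  obtain ⟨x, hx⟩ := hxa
  obtain ⟨y, hy⟩ := hya
  have hDF : algebraMap (𝓞 F) F D ≠ 0 := RingOfIntegers.coe_ne_zero_iff.mpr hD
  have hxy : x * y = D * D := by
    apply RingOfIntegers.coe_injective
    rw [map_mul, hx, hy, map_mul, mul_mul_mul_comm, mul_inv_cancel₀ ha, mul_one]
  have hdvd : Ideal.span ({x} : Set (𝓞 F)) ∣ Ideal.span ({D * D} : Set (𝓞 F)) :=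
    Ideal.dvd_iff_le.mpr (Ideal.span_singleton_le_span_singleton.mpr ⟨y, hxy.symm⟩)
  set J : {J : Ideal (𝓞 F) // J ∣ Ideal.span ({D * D} : Set (𝓞 F))} := ⟨_, hdvd⟩ with hJ
  have hex : ∃ z : 𝓞 F, J.1 = Ideal.span {z} := ⟨x, rfl⟩
  have hgc : Ideal.span ({x} : Set (𝓞 F)) = Ideal.span {g J} := by
    simp only [g, dif_pos hex]
    exact hex.choose_spec
  have hassoc : Associated (g J) x :=
    Ideal.span_singleton_eq_span_singleton.mp hgc.symm
  obtain ⟨u, hu⟩ := hassoc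
  set q : (𝓞 F)ˣ ⧸ H := QuotientGroup.mk u with hq
  set w : (𝓞 F)ˣ := Quot.out q with hw
  have hwq : (QuotientGroup.mk w : (𝓞 F)ˣ ⧸ H) = QuotientGroup.mk u := by
    rw [hw, hq]; exact Quotient.out_eq _
  obtain ⟨v, hv⟩ := (QuotientGroup.eq).mp hwq
  have hvv : (v : (𝓞 F)ˣ) * v = w⁻¹ * u := by rw [← hv]; exact (pow_two v).symm
  have huvw : u = w * (v * v) := by rw [hvv]; group
  have hax : a = algebraMap (𝓞 F) F x / algebraMap (𝓞 F) F D := by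
    rw [hx, mul_comm, mul_div_assoc, div_self hDF, mul_one]
  have hx2 : (x : 𝓞 F) = ((v * v : (𝓞 F)ˣ) : 𝓞 F) * (g J * (w : 𝓞 F)) := by
    rw [← hu, huvw]; push_cast; ring
  refine ⟨f (J, q), Finset.mem_image_of_mem f (Finset.mem_univ _), v, ?_⟩
  simp only [f]
  rw [← hw, hax, hx2, map_mul, mul_div_assoc]
end
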